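/- arXiv:2602.18188 — 3 statements merged into one kernel-verified Lean document; each statement's English description precedes it below -/
import Mathlib

section
/- Let r be a positive integer, let G' be a correctly gadgeted graph for parameter r, and let χ : V(G') → ℕ be a labeling that is a distance-2 coloring and is edge-consistent in every r-gball. Let v be an original vertex of G' with neighbors w1, w2, w3. Then there is no edge {u1,u2} of G' lying in gball_r(v) such that χ(u1) = χ(w_i) and χ(u2) = χ(w_j) for some i ≠ j with i, j ∈ {1,2,3}; i.e., there is no edge of gball_r(v) between vertices having the same colors as two distinct outer neighbors of v. -/
open scoped ENNReal

namespace LCLGadget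

/-- Adjacency relation (one direction) of the A-gadget, on vertex indices `0,…,5`
representing the paper's vertices `1,…,6`. -/
def AAdj (i j : Fin 6) : Prop :=
  (i, j) ∈ ([(0,1),(0,2),(1,2),(1,3),(2,4),(3,4),(3,5),(4,5)] : List (Fin 6 × Fin 6))

variable {V : Type} [LinearOrder V]

/-- The gadget vertices of the gadgeted graph `gadget(G, x)`: a vertex `⟨(a,b,i,j), _⟩`
is vertex `j` of the `i`-th A-gadget on the expanded edge replacing the edge `{a,b}`
(oriented so that `a < b`). -/
abbrev GadgetAux (G : SimpleGraph V) (x : Sym2 V → ℕ) : Type :=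
  {p : V × V × ℕ × Fin 6 //
    p.1 < p.2.1 ∧ G.Adj p.1 p.2.1 ∧ p.2.2.1 < x s(p.1, p.2.1)}

/-- Vertices of the gadgeted graph: original vertices (`Sum.inl`) and gadget
vertices (`Sum.inr`). -/
abbrev GadgetVert (G : SimpleGraph V) (x : Sym2 V → ℕ) : Type :=
  V ⊕ GadgetAux G x

/-- Base adjacency relation of the gadgeted graph (to be symmetrized):
vertex `0` (paper's `1`) of the first gadget is joined to the smaller endpoint,
vertex `5` (paper's `6`) of the last gadget is joined to the larger endpoint,
within one gadget the A-gadget edges are used, and consecutive gadgets of a chain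
are joined by an edge from vertex `5` to vertex `0`. -/
def gadgetRel (G : SimpleGraph V) (x : Sym2 V → ℕ) :
    GadgetVert G x → GadgetVert G x → Prop
  | Sum.inl sv, Sum.inr ⟨⟨a, b, i, j⟩, _⟩ =>
      (sv = a ∧ i = 0 ∧ j = 0) ∨ (sv = b ∧ i = x s(a, b) - 1 ∧ j = 5)
  | Sum.inr ⟨⟨a, b, i, j⟩, _⟩, Sum.inr ⟨⟨a', b', i', j'⟩, _⟩ =>
      a = a' ∧ b = b' ∧ ((i = i' ∧ AAdj j j') ∨ (i' = i + 1 ∧ j = 5 ∧ j' = 0))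
  | _, _ => False

/-- The gadgeted graph `G' = gadget(G, x)`. -/
def gadgetGraph (G : SimpleGraph V) (x : Sym2 V → ℕ) : SimpleGraph (GadgetVert G x) :=
  SimpleGraph.fromRel (gadgetRel G x)

/-- Weight of a (potential) edge of the gadgeted graph: `1/2` if it is incident to an
original vertex, `0` otherwise. -/
noncomputable def wt (G : SimpleGraph V) (x : Sym2 V → ℕ) :
    GadgetVert G x → GadgetVert G x → ℝ≥0∞
  | Sum.inl _, _ => 1/2
  | _, Sum.inl _ => 1/2
  | _, _ => 0

/-- The gadgeted distance `gdist(u,v)`: the minimum total weight of a path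
from `u` to `v` in the gadgeted graph. -/
noncomputable def gdist (G : SimpleGraph V) (x : Sym2 V → ℕ) (u v : GadgetVert G x) : ℝ≥0∞ :=
  ⨅ p : (gadgetGraph G x).Walk u v,
    (p.darts.map fun d => wt G x d.toProd.1 d.toProd.2).sum

/-- Membership of a vertex `u` in the `r`-gball around `c`. -/
def inGball (G : SimpleGraph V) (x : Sym2 V → ℕ) (r : ℕ) (c u : GadgetVert G x) : Prop :=
  gdist G x c u ≤ (r : ℝ≥0∞)

/-- `u` is an original vertex of the gadgeted graph. -/
def IsOriginal (G : SimpleGraph V) (x : Sym2 V → ℕ) (u : GadgetVert G x) : Prop :=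
  ∃ v : V, u = Sum.inl v

/-- `u` is an outer vertex: a gadget vertex adjacent to an original vertex. -/
def IsOuter (G : SimpleGraph V) (x : Sym2 V → ℕ) (u : GadgetVert G x) : Prop :=
  (∃ p, u = Sum.inr p) ∧ ∃ w, IsOriginal G x w ∧ (gadgetGraph G x).Adj u w

/-- `u` is an inner vertex: a gadget vertex not adjacent to any original vertex. -/
def IsInner (G : SimpleGraph V) (x : Sym2 V → ℕ) (u : GadgetVert G x) : Prop :=
  (∃ p, u = Sum.inr p) ∧ ¬ ∃ w, IsOriginal G x w ∧ (gadgetGraph G x).Adj u w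

/-- `G` is a 3-regular graph. -/
def ThreeRegular (G : SimpleGraph V) : Prop :=
  ∀ v : V, (G.neighborSet v).ncard = 3

/-- The edge labeling `x` takes positive values on all edges. -/
def PosLabels (G : SimpleGraph V) (x : Sym2 V → ℕ) : Prop :=
  ∀ e ∈ G.edgeSet, 0 < x e

/-- `x` is a distance-`2r` edge coloring of `G`: any two distinct edges of `G` at
distance at most `2r` from each other receive distinct labels. -/
def DistEdgeColoring (G : SimpleGraph V) (x : Sym2 V → ℕ) (r : ℕ) : Prop :=
  ∀ e ∈ G.edgeSet, ∀ f ∈ G.edgeSet, e ≠ f →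
    (∃ a ∈ e, ∃ b ∈ f, G.edist a b ≤ (2 * r : ℕ)) → x e ≠ x f

/-- The gadgeted graph `gadget(G,x)` is correctly gadgeted for parameter `r`. -/
def CorrectlyGadgeted (G : SimpleGraph V) (x : Sym2 V → ℕ) (r : ℕ) : Prop :=
  ThreeRegular G ∧ PosLabels G x ∧ DistEdgeColoring G x r

/-- `χ` is a distance-2 coloring of the gadgeted graph:
it is injective on `{v} ∪ N(v)` for every vertex `v`. -/
def Dist2Coloring (G : SimpleGraph V) (x : Sym2 V → ℕ) (χ : GadgetVert G x → ℕ) : Prop :=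
  ∀ v : GadgetVert G x, Set.InjOn χ (insert v ((gadgetGraph G x).neighborSet v))

/-- `χ` is edge-consistent in every `r`-gball: whenever `{v,u}` is an edge and
`v' ∈ gball_r(v)` has `χ(v') = χ(v)`, there is a neighbor `u'` of `v'` with
`χ(u') = χ(u)`. -/
def EdgeConsistent (G : SimpleGraph V) (x : Sym2 V → ℕ) (r : ℕ)
    (χ : GadgetVert G x → ℕ) : Prop :=
  ∀ v u : GadgetVert G x, (gadgetGraph G x).Adj v u →
    ∀ v', inGball G x r v v' → χ v' = χ v →
      ∃ u', (gadgetGraph G x).Adj v' u' ∧ χ u' = χ u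

/-- `u` lies on a triangle (cycle of length 3) of the gadgeted graph. -/
def OnTriangle (G : SimpleGraph V) (x : Sym2 V → ℕ) (u : GadgetVert G x) : Prop :=
  ∃ a b, (gadgetGraph G x).Adj u a ∧ (gadgetGraph G x).Adj u b ∧ (gadgetGraph G x).Adj a b

end LCLGadget

namespace LCLGadgetThms
open LCLGadget SimpleGraph

variable {V : Type} [LinearOrder V]
variable {G : SimpleGraph V} {x : Sym2 V → ℕ}

lemma adj_inl_iff {sv : V} {q : GadgetVert G x}
    (h : (gadgetGraph G x).Adj (Sum.inl sv) q) :
    ∃ a b i j hp, q = Sum.inr ⟨(a,b,i,j), hp⟩ ∧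
      ((sv = a ∧ i = 0 ∧ j = 0) ∨ (sv = b ∧ i = x s(a,b) - 1 ∧ j = 5)) := by
  rw [gadgetGraph, fromRel_adj] at h
  obtain ⟨hne, h | h⟩ := h
  · match q, h with
    | Sum.inr ⟨(a,b,i,j), hp⟩, h => exact ⟨a,b,i,j,hp,rfl,h⟩
  · match q, h with
    | Sum.inl _, h => exact absurd h (by simp [gadgetRel])

lemma adj_inr_cases {a b : V} {i : ℕ} {j : Fin 6} {hp} {q : GadgetVert G x}
    (h : (gadgetGraph G x).Adj (Sum.inr ⟨(a,b,i,j), hp⟩) q) :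
    (q = Sum.inl a ∧ i = 0 ∧ j = 0) ∨
    (q = Sum.inl b ∧ i = x s(a,b) - 1 ∧ j = 5) ∨
    (∃ j' hp', q = Sum.inr ⟨(a,b,i,j'), hp'⟩ ∧ (AAdj j j' ∨ AAdj j' j)) ∨
    (∃ hp', q = Sum.inr ⟨(a,b,i+1,(0:Fin 6)), hp'⟩ ∧ j = 5) ∨
    (∃ i' hp', i = i'+1 ∧ q = Sum.inr ⟨(a,b,i',(5:Fin 6)), hp'⟩ ∧ j = 0) := by
  rw [gadgetGraph, fromRel_adj] at h
  obtain ⟨hne, h | h⟩ := h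
  · match q, h with
    | Sum.inl sv, h => exact absurd h (by simp [gadgetRel])
    | Sum.inr ⟨(a',b',i',j'), hp'⟩, h => 
      obtain ⟨rfl, rfl, ⟨rfl, hA⟩ | ⟨rfl, rfl, rfl⟩⟩ := h
      · exact Or.inr (Or.inr (Or.inl ⟨j', hp', rfl, Or.inl hA⟩))
      · exact Or.inr (Or.inr (Or.inr (Or.inl ⟨hp', rfl, rfl⟩)))
  · match q, h with
    | Sum.inl sv, h =>
      rcases h with ⟨rfl, rfl, rfl⟩ | ⟨rfl, rfl, rfl⟩
      · exact Or.inl ⟨rfl, rfl, rfl⟩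
      · exact Or.inr (Or.inl ⟨rfl, rfl, rfl⟩)
    | Sum.inr ⟨(a',b',i',j'), hp'⟩, h =>
      obtain ⟨rfl, rfl, ⟨rfl, hA⟩ | ⟨rfl, rfl, rfl⟩⟩ := h
      · exact Or.inr (Or.inr (Or.inl ⟨j', hp', rfl, Or.inr hA⟩))
      · exact Or.inr (Or.inr (Or.inr (Or.inr ⟨i', hp', rfl, rfl, rfl⟩)))

def gv (G : SimpleGraph V) (x : Sym2 V → ℕ) (a b : V) (i : ℕ) (j : Fin 6)
    (hp : a < b ∧ G.Adj a b ∧ i < x s(a,b)) : GadgetVert G x :=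
  Sum.inr ⟨(a,b,i,j), hp⟩

lemma gv_ne_inl {a b c : V} {i j hp} : gv G x a b i j hp ≠ Sum.inl c := by
  simp [gv]

lemma gv_inj {a b : V} {i : ℕ} {j j' : Fin 6} {hp hp'}
    (h : gv G x a b i j hp = gv G x a b i j' hp') : j = j' := by
  simpa [gv] using h

lemma adj_gv {a b : V} {i : ℕ} {j j' : Fin 6} {hp}
    (hjj : AAdj j j' ∨ AAdj j' j) (hne : j ≠ j') :
    (gadgetGraph G x).Adj (gv G x a b i j hp) (gv G x a b i j' hp) := by
  rw [gadgetGraph, fromRel_adj]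
  refine ⟨by simp [gv, hne], ?_⟩
  rcases hjj with hj | hj
  · exact Or.inl ⟨rfl, rfl, Or.inl ⟨rfl, hj⟩⟩
  · exact Or.inr ⟨rfl, rfl, Or.inl ⟨rfl, hj⟩⟩

lemma adj_inl_gv0 {a b : V} {hp} :
    (gadgetGraph G x).Adj (Sum.inl a) (gv G x a b 0 0 hp) := by
  rw [gadgetGraph, fromRel_adj]
  exact ⟨by simp [gv], Or.inl (Or.inl ⟨rfl, rfl, rfl⟩)⟩

lemma adj_inl_gv5 {a b : V} {hp} :
    (gadgetGraph G x).Adj (Sum.inl b) (gv G x a b (x s(a,b) - 1) 5 hp) := by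
  rw [gadgetGraph, fromRel_adj]
  exact ⟨by simp [gv], Or.inl (Or.inr ⟨rfl, rfl, rfl⟩)⟩

lemma nbhd_mid {a b : V} {i : ℕ} {j : Fin 6} {hp} {q : GadgetVert G x}
    (hj0 : j ≠ 0) (hj5 : j ≠ 5)
    (h : (gadgetGraph G x).Adj (gv G x a b i j hp) q) :
    ∃ j', (AAdj j j' ∨ AAdj j' j) ∧ q = gv G x a b i j' hp := by
  rcases adj_inr_cases h with ⟨-,-,hj⟩ | ⟨-,-,hj⟩ | ⟨j',hp',rfl,hA⟩ | ⟨-,-,hj⟩ | ⟨-,-,-,-,hj⟩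
  · exact absurd hj hj0
  · exact absurd hj hj5
  · exact ⟨j', hA, rfl⟩
  · exact absurd hj hj5
  · exact absurd hj hj0

lemma nbhd1 {a b : V} {i : ℕ} {hp} {q : GadgetVert G x}
    (h : (gadgetGraph G x).Adj (gv G x a b i 1 hp) q) :
    q = gv G x a b i 0 hp ∨ q = gv G x a b i 2 hp ∨ q = gv G x a b i 3 hp := by
  obtain ⟨j', hA, rfl⟩ := nbhd_mid (by decide) (by decide) h
  fin_cases j' <;> first | exact absurd hA (by decide) | tauto

lemma nbhd2 {a b : V} {i : ℕ} {hp} {q : GadgetVert G x}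
    (h : (gadgetGraph G x).Adj (gv G x a b i 2 hp) q) :
    q = gv G x a b i 0 hp ∨ q = gv G x a b i 1 hp ∨ q = gv G x a b i 4 hp := by
  obtain ⟨j', hA, rfl⟩ := nbhd_mid (by decide) (by decide) h
  fin_cases j' <;> first | exact absurd hA (by decide) | tauto

lemma nbhd3 {a b : V} {i : ℕ} {hp} {q : GadgetVert G x}
    (h : (gadgetGraph G x).Adj (gv G x a b i 3 hp) q) :
    q = gv G x a b i 1 hp ∨ q = gv G x a b i 4 hp ∨ q = gv G x a b i 5 hp := by
  obtain ⟨j', hA, rfl⟩ := nbhd_mid (by decide) (by decide) h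
  fin_cases j' <;> first | exact absurd hA (by decide) | tauto

lemma nbhd4 {a b : V} {i : ℕ} {hp} {q : GadgetVert G x}
    (h : (gadgetGraph G x).Adj (gv G x a b i 4 hp) q) :
    q = gv G x a b i 2 hp ∨ q = gv G x a b i 3 hp ∨ q = gv G x a b i 5 hp := by
  obtain ⟨j', hA, rfl⟩ := nbhd_mid (by decide) (by decide) h
  fin_cases j' <;> first | exact absurd hA (by decide) | tauto

lemma nbhd_P0 {a b : V} {hp} {q : GadgetVert G x}
    (h : (gadgetGraph G x).Adj (gv G x a b 0 0 hp) q) :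
    q = Sum.inl a ∨ q = gv G x a b 0 1 hp ∨ q = gv G x a b 0 2 hp := by
  rcases adj_inr_cases h with ⟨rfl,-,-⟩ | ⟨-,-,hj⟩ | ⟨j',hp',rfl,hA⟩ | ⟨-,-,hj⟩ | ⟨i',-,hj,-,-⟩
  · exact Or.inl rfl
  · exact absurd hj (by decide)
  · fin_cases j' <;> first | exact absurd hA (by decide) | tauto
  · exact absurd hj (by decide)
  · exact absurd hj (by omega)

lemma nbhd_Q5 {a b : V} {hp} {q : GadgetVert G x}
    (h : (gadgetGraph G x).Adj (gv G x a b (x s(a,b) - 1) 5 hp) q) :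
    q = Sum.inl b ∨ q = gv G x a b (x s(a,b) - 1) 3 hp ∨ q = gv G x a b (x s(a,b) - 1) 4 hp := by
  rcases adj_inr_cases h with ⟨-,-,hj⟩ | ⟨rfl,-,-⟩ | ⟨j',hp',rfl,hA⟩ | ⟨hp',-,-⟩ | ⟨-,-,-,-,hj⟩
  · exact absurd hj (by decide)
  · exact Or.inl rfl
  · fin_cases j' <;> first | exact absurd hA (by decide) | tauto
  · have h1 : x s(a,b) - 1 < x s(a,b) := hp.2.2
    have h2 : x s(a,b) - 1 + 1 < x s(a,b) := hp'.2.2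
    omega
  · exact absurd hj (by decide)

noncomputable def wW (G : SimpleGraph V) (x : Sym2 V → ℕ) {s e : GadgetVert G x}
    (p : (gadgetGraph G x).Walk s e) : ℝ≥0∞ :=
  (p.darts.map fun d => wt G x d.toProd.1 d.toProd.2).sum

lemma gdist_eq (s e : GadgetVert G x) : gdist G x s e = ⨅ p : (gadgetGraph G x).Walk s e, wW G x p := rfl

lemma wW_nil {s : GadgetVert G x} : wW G x (.nil : (gadgetGraph G x).Walk s s) = 0 := rfl

lemma wW_cons {s t e : GadgetVert G x} (h : (gadgetGraph G x).Adj s t)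
    (p : (gadgetGraph G x).Walk t e) :
    wW G x (SimpleGraph.Walk.cons h p) = wt G x s t + wW G x p := by
  simp [wW]

lemma wt_symm (u v : GadgetVert G x) : wt G x u v = wt G x v u := by
  cases u <;> cases v <;> rfl

lemma wW_reverse {s e : GadgetVert G x} (p : (gadgetGraph G x).Walk s e) :
    wW G x p.reverse = wW G x p := by
  rw [wW, Walk.darts_reverse, List.map_reverse, List.sum_reverse, List.map_map, wW]
  congr 1
  apply List.map_congr_left
  intro d _
  exact wt_symm _ _

/-- indicator of original vertices -/
def gg : GadgetVert G x → ℕ := Sum.elim (fun _ => 1) (fun _ => 0)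

lemma wt_adj {u v : GadgetVert G x} (h : (gadgetGraph G x).Adj u v) :
    wt G x u v = ((gg u + gg v : ℕ) : ℝ≥0∞) / 2 := by
  match u, v with
  | Sum.inl a, Sum.inl b => exact absurd h (by
      rw [gadgetGraph, fromRel_adj]
      rintro ⟨-, h | h⟩ <;> exact h)
  | Sum.inl a, Sum.inr p => simp [wt, gg, one_div]
  | Sum.inr p, Sum.inl a => simp [wt, gg, one_div]
  | Sum.inr p, Sum.inr q => simp [wt, gg]

lemma wW_parity {s e : GadgetVert G x} (p : (gadgetGraph G x).Walk s e) :
    ∃ n : ℕ, wW G x p = (n : ℝ≥0∞) / 2 ∧ n % 2 = (gg s + gg e) % 2 := by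
  induction p with
  | nil => exact ⟨0, by simp [wW_nil], by omega⟩
  | @cons s t e h q ih =>
    obtain ⟨n, hn, hpar⟩ := ih
    refine ⟨gg s + gg t + n, ?_, by omega⟩
    rw [wW_cons, hn, wt_adj h]
    push_cast
    simp [ENNReal.add_div]

lemma wW_append {s t e : GadgetVert G x} (p : (gadgetGraph G x).Walk s t)
    (q : (gadgetGraph G x).Walk t e) :
    wW G x (p.append q) = wW G x p + wW G x q := by
  rw [wW, SimpleGraph.Walk.darts_append, List.map_append, List.sum_append]
  rfl

lemma inGball_of_walk {r : ℕ} {c u : GadgetVert G x} (p : (gadgetGraph G x).Walk c u)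
    (h : wW G x p ≤ r) : inGball G x r c u :=
  le_trans (iInf_le _ p) h

lemma no_inl_inl_adj (a b : V) : ¬ (gadgetGraph G x).Adj (Sum.inl a) (Sum.inl b) := by
  rw [gadgetGraph, SimpleGraph.fromRel_adj]
  rintro ⟨-, h | h⟩ <;> exact h

lemma wt_le_half (u v : GadgetVert G x) : wt G x u v ≤ 1/2 := by
  cases u <;> cases v <;> simp [wt]

lemma wt_inr_inr (p q : GadgetAux G x) : wt G x (Sum.inr p) (Sum.inr q) = 0 := rfl

instance AAdj.dec (i j : Fin 6) : Decidable (AAdj i j) := by unfold AAdj; infer_instance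

lemma wt_inl (a : V) (u : GadgetVert G x) : wt G x (Sum.inl a) u = 1/2 := by cases u <;> rfl

lemma one_le_r {r : ℕ} (hr : 0 < r) : (1 : ℝ≥0∞) ≤ r := by exact_mod_cast hr

example (r : ℕ) (hr : 0 < r) (v b : V) (hp : v < b ∧ G.Adj v b ∧ 0 < x s(v,b))
    (wj : GadgetVert G x) (hadj : (gadgetGraph G x).Adj wj (Sum.inl v)) :
    inGball G x r wj (gv G x v b 0 1 hp) := by
  refine inGball_of_walk (SimpleGraph.Walk.cons hadj (SimpleGraph.Walk.cons adj_inl_gv0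
    (SimpleGraph.Walk.cons (adj_gv (by decide) (by decide)) SimpleGraph.Walk.nil))) ?_
  rw [wW_cons, wW_cons, wW_cons, wW_nil]
  simp only [gv, wt_inr_inr, wt_inl]
  calc wt G x wj (Sum.inl v) + (1/2 + (0+0)) ≤ 1/2 + (1/2 + (0+0)) := by gcongr; exact wt_le_half _ _
    _ = 1 := by rw [add_zero, add_zero, one_div, ENNReal.inv_two_add_inv_two]
    _ ≤ r := one_le_r hr

lemma keyP (G : SimpleGraph V) (x : Sym2 V → ℕ) (r : ℕ) (hr : 0 < r)
    (χ : GadgetVert G x → ℕ) (hχ2 : Dist2Coloring G x χ) (hχc : EdgeConsistent G x r χ)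
    (v b : V) (hp : v < b ∧ G.Adj v b ∧ 0 < x s(v,b))
    (w : Fin 3 → GadgetVert G x)
    (hwinj : Function.Injective w)
    (hwadj : ∀ m, (gadgetGraph G x).Adj (Sum.inl v) (w m))
    (i j k : Fin 3) (hij : i ≠ j) (hik : i ≠ k) (hjk : j ≠ k)
    (hwi : w i = gv G x v b 0 0 hp)
    (z : GadgetVert G x) (hz : (gadgetGraph G x).Adj (w i) z)
    (hcz : χ z = χ (w j)) : False := by
  have hmem : ∀ m, w m ∈ insert (Sum.inl v) ((gadgetGraph G x).neighborSet (Sum.inl v)) :=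
    fun m => Set.mem_insert_of_mem _ (hwadj m)
  have hcv : ∀ m, χ (w m) ≠ χ (Sum.inl v) := fun m h =>
    (hwadj m).ne' (hχ2 (Sum.inl v) (hmem m) (Set.mem_insert _ _) h)
  have hcw : ∀ m m', χ (w m) = χ (w m') → m = m' := fun m m' h =>
    hwinj (hχ2 (Sum.inl v) (hmem m) (hmem m') h)
  have hinjN : ∀ c p q : GadgetVert G x, (gadgetGraph G x).Adj c p → (gadgetGraph G x).Adj c q →
      χ p = χ q → p = q := fun c p q h1 h2 h =>
    hχ2 c (Set.mem_insert_of_mem _ h1) (Set.mem_insert_of_mem _ h2) h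
  have hinjS : ∀ c p : GadgetVert G x, (gadgetGraph G x).Adj c p → χ p = χ c → p = c :=
    fun c p h1 h => hχ2 c (Set.mem_insert_of_mem _ h1) (Set.mem_insert _ _) h
  -- ball facts
  have hballv : ∀ (j₁ j₂ : Fin 6), AAdj 0 j₁ ∨ AAdj j₁ 0 → AAdj j₁ j₂ ∨ AAdj j₂ j₁ →
      j₁ ≠ 0 → j₂ ≠ j₁ →
      inGball G x r (Sum.inl v) (gv G x v b 0 j₂ hp) := by
    intro j₁ j₂ h1 h2 hne1 hne2
    refine inGball_of_walk (SimpleGraph.Walk.cons adj_inl_gv0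
      (SimpleGraph.Walk.cons (adj_gv h1 (Ne.symm hne1))
      (SimpleGraph.Walk.cons (adj_gv h2 (Ne.symm hne2)) SimpleGraph.Walk.nil))) ?_
    rw [wW_cons, wW_cons, wW_cons, wW_nil]
    simp only [gv, wt_inr_inr, wt_inl]
    calc (1:ℝ≥0∞)/2 + (0 + (0+0)) ≤ 1 := by
          rw [add_zero, add_zero, add_zero]
          exact le_trans (ENNReal.half_le_self) le_rfl
      _ ≤ r := one_le_r hr
  have hball1lvl : ∀ (j₁ : Fin 6), AAdj 0 j₁ ∨ AAdj j₁ 0 → j₁ ≠ 0 →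
      ∀ c : GadgetVert G x, (gadgetGraph G x).Adj c (Sum.inl v) →
      inGball G x r c (gv G x v b 0 j₁ hp) := by
    intro j₁ h1 hne1 c hadj
    refine inGball_of_walk (SimpleGraph.Walk.cons hadj (SimpleGraph.Walk.cons adj_inl_gv0
      (SimpleGraph.Walk.cons (adj_gv h1 (Ne.symm hne1)) SimpleGraph.Walk.nil))) ?_
    rw [wW_cons, wW_cons, wW_cons, wW_nil]
    simp only [gv, wt_inr_inr, wt_inl]
    calc wt G x c (Sum.inl v) + (1/2 + (0+0)) ≤ 1/2 + (1/2 + (0+0)) := by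
          gcongr; exact wt_le_half _ _
      _ = 1 := by rw [add_zero, add_zero, one_div, ENNReal.inv_two_add_inv_two]
      _ ≤ r := one_le_r hr
  -- zero-weight balls: from a gadget vertex back to w i = P0
  have hzero : ∀ (j₁ j₂ : Fin 6) (h1 : AAdj j₁ j₂ ∨ AAdj j₂ j₁) (hne : j₁ ≠ j₂)
      (h2 : AAdj j₂ 0 ∨ AAdj 0 j₂) (hne2 : j₂ ≠ 0),
      inGball G x r (gv G x v b 0 j₁ hp) (w i) := by
    intro j₁ j₂ h1 hne h2 hne2
    rw [hwi]
    refine inGball_of_walk (SimpleGraph.Walk.cons (adj_gv h1 hne)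
      (SimpleGraph.Walk.cons (adj_gv h2 hne2) SimpleGraph.Walk.nil)) ?_
    rw [wW_cons, wW_cons, wW_nil]
    simp only [gv, wt_inr_inr]
    simp
  have hzero3 : ∀ (j₁ j₂ j₃ : Fin 6) (h1 : AAdj j₁ j₂ ∨ AAdj j₂ j₁) (hne : j₁ ≠ j₂)
      (h2 : AAdj j₂ j₃ ∨ AAdj j₃ j₂) (hne2 : j₂ ≠ j₃)
      (h3 : AAdj j₃ 0 ∨ AAdj 0 j₃) (hne3 : j₃ ≠ 0),
      inGball G x r (gv G x v b 0 j₁ hp) (w i) := by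
    intro j₁ j₂ j₃ h1 hne h2 hne2 h3 hne3
    rw [hwi]
    refine inGball_of_walk (SimpleGraph.Walk.cons (adj_gv h1 hne)
      (SimpleGraph.Walk.cons (adj_gv h2 hne2)
      (SimpleGraph.Walk.cons (adj_gv h3 hne3) SimpleGraph.Walk.nil))) ?_
    rw [wW_cons, wW_cons, wW_cons, wW_nil]
    simp only [gv, wt_inr_inr]
    simp
  -- start
  rw [hwi] at hz
  rcases nbhd_P0 hz with rfl | rfl | rfl
  · exact hcv j hcz.symm
  · -- z = P1, χ P1 = C
    obtain ⟨m, hm, hcm⟩ := hχc (w j) (Sum.inl v) (hwadj j).symm _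
      (hball1lvl 1 (by decide) (by decide) _ (hwadj j).symm) hcz
    rcases nbhd1 hm with rfl | rfl | rfl
    · exact hcv i (by rw [hwi]; exact hcm)
    · exact gv_ne_inl (hinjN _ _ _ (adj_gv (by decide) (by decide)) adj_inl_gv0.symm hcm)
    · -- m = P3, χ P3 = A
      obtain ⟨s, hs, hcs⟩ := hχc (Sum.inl v) (w i) (hwadj i) _
        (hballv 1 3 (by decide) (by decide) (by decide) (by decide)) hcm
      obtain ⟨q, hq, hcq⟩ := hχc (Sum.inl v) (w k) (hwadj k) _
        (hballv 1 3 (by decide) (by decide) (by decide) (by decide)) hcm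
      rcases nbhd3 hs with rfl | rfl | rfl
      · exact hij (hcw i j (hcs.symm.trans hcz))
      · -- s = P4 : χ P4 = B
        rcases nbhd3 hq with rfl | rfl | rfl
        · exact hjk (hcw j k (hcz.symm.trans hcq))
        · exact hik (hcw i k (hcs.symm.trans hcq))
        · -- q = P5 : χ P5 = D ; edge (P4,P5), v' = w i
          obtain ⟨t, ht, hct⟩ := hχc _ _ (adj_gv (G:=G) (x:=x) (a:=v) (b:=b) (i:=0)
              (j:=4) (j':=5) (hp:=hp) (by decide) (by decide)) (w i)
            (hzero 4 2 (by decide) (by decide) (by decide) (by decide)) hcs.symm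
          rw [hwi] at ht
          rcases nbhd_P0 ht with rfl | rfl | rfl
          · exact hcv k (hct.trans hcq).symm
          · exact hjk (hcw j k (hcz.symm.trans (hct.trans hcq)))
          · -- t = P2 : χ P2 = χ P5 ; both nbrs of P4
            have := hinjN _ _ _ (adj_gv (j:=4) (j':=2) (by decide) (by decide))
              (adj_gv (j:=4) (j':=5) (by decide) (by decide)) hct
            exact absurd (gv_inj this) (by decide)
      · -- s = P5 : χ P5 = B
        rcases nbhd3 hq with rfl | rfl | rfl
        · exact hjk (hcw j k (hcz.symm.trans hcq))
        · -- q = P4 : χ P4 = D ; edge (P5,P4), v' = w i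
          obtain ⟨t, ht, hct⟩ := hχc _ _ (adj_gv (j:=5) (j':=4) (hp:=hp) (by decide) (by decide)) (w i)
            (hzero3 5 4 2 (by decide) (by decide) (by decide) (by decide) (by decide) (by decide))
            hcs.symm
          rw [hwi] at ht
          rcases nbhd_P0 ht with rfl | rfl | rfl
          · exact hcv k (hct.trans hcq).symm
          · exact hjk (hcw j k (hcz.symm.trans (hct.trans hcq)))
          · -- t = P2 : χ P2 = χ P4, but P2 adj P4
            have := hinjS _ _ (adj_gv (j:=2) (j':=4) (by decide) (by decide)) hct.symm
            exact absurd (gv_inj this) (by decide)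
        · exact hik (hcw i k (hcs.symm.trans hcq))
  · -- z = P2, χ P2 = C
    obtain ⟨m, hm, hcm⟩ := hχc (w j) (Sum.inl v) (hwadj j).symm _
      (hball1lvl 2 (by decide) (by decide) _ (hwadj j).symm) hcz
    rcases nbhd2 hm with rfl | rfl | rfl
    · exact hcv i (by rw [hwi]; exact hcm)
    · exact gv_ne_inl (hinjN _ _ _ (adj_gv (by decide) (by decide)) adj_inl_gv0.symm hcm)
    · -- m = P4, χ P4 = A
      obtain ⟨s, hs, hcs⟩ := hχc (Sum.inl v) (w i) (hwadj i) _
        (hballv 2 4 (by decide) (by decide) (by decide) (by decide)) hcm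
      obtain ⟨q, hq, hcq⟩ := hχc (Sum.inl v) (w k) (hwadj k) _
        (hballv 2 4 (by decide) (by decide) (by decide) (by decide)) hcm
      rcases nbhd4 hs with rfl | rfl | rfl
      · exact hij (hcw i j (hcs.symm.trans hcz))
      · -- s = P3 : χ P3 = B
        rcases nbhd4 hq with rfl | rfl | rfl
        · exact hjk (hcw j k (hcz.symm.trans hcq))
        · exact hik (hcw i k (hcs.symm.trans hcq))
        · -- q = P5 : χ P5 = D ; edge (P3,P5), v' = w i
          obtain ⟨t, ht, hct⟩ := hχc _ _ (adj_gv (j:=3) (j':=5) (hp:=hp) (by decide) (by decide)) (w i)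
            (hzero 3 1 (by decide) (by decide) (by decide) (by decide)) hcs.symm
          rw [hwi] at ht
          rcases nbhd_P0 ht with rfl | rfl | rfl
          · exact hcv k (hct.trans hcq).symm
          · -- t = P1 : χ P1 = χ P5 ; both nbrs of P3
            have := hinjN _ _ _ (adj_gv (j:=3) (j':=1) (by decide) (by decide))
              (adj_gv (j:=3) (j':=5) (by decide) (by decide)) hct
            exact absurd (gv_inj this) (by decide)
          · exact hjk (hcw j k (hcz.symm.trans (hct.trans hcq)))
      · -- s = P5 : χ P5 = B
        rcases nbhd4 hq with rfl | rfl | rfl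
        · exact hjk (hcw j k (hcz.symm.trans hcq))
        · -- q = P3 : χ P3 = D ; edge (P5,P3), v' = w i
          obtain ⟨t, ht, hct⟩ := hχc _ _ (adj_gv (j:=5) (j':=3) (hp:=hp) (by decide) (by decide)) (w i)
            (hzero3 5 4 2 (by decide) (by decide) (by decide) (by decide) (by decide) (by decide))
            hcs.symm
          rw [hwi] at ht
          rcases nbhd_P0 ht with rfl | rfl | rfl
          · exact hcv k (hct.trans hcq).symm
          · -- t = P1 : χ P1 = χ P3, but P1 adj P3
            have := hinjS _ _ (adj_gv (j:=1) (j':=3) (by decide) (by decide)) hct.symm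
            exact absurd (gv_inj this) (by decide)
          · exact hjk (hcw j k (hcz.symm.trans (hct.trans hcq)))
        · exact hik (hcw i k (hcs.symm.trans hcq))

lemma keyQ (G : SimpleGraph V) (x : Sym2 V → ℕ) (r : ℕ) (hr : 0 < r)
    (χ : GadgetVert G x → ℕ) (hχ2 : Dist2Coloring G x χ) (hχc : EdgeConsistent G x r χ)
    (a v : V) (hp : a < v ∧ G.Adj a v ∧ x s(a,v) - 1 < x s(a,v))
    (w : Fin 3 → GadgetVert G x)
    (hwinj : Function.Injective w)
    (hwadj : ∀ m, (gadgetGraph G x).Adj (Sum.inl v) (w m))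
    (i j k : Fin 3) (hij : i ≠ j) (hik : i ≠ k) (hjk : j ≠ k)
    (hwi : w i = gv G x a v (x s(a,v) - 1) 5 hp)
    (z : GadgetVert G x) (hz : (gadgetGraph G x).Adj (w i) z)
    (hcz : χ z = χ (w j)) : False := by
  have hmem : ∀ m, w m ∈ insert (Sum.inl v) ((gadgetGraph G x).neighborSet (Sum.inl v)) :=
    fun m => Set.mem_insert_of_mem _ (hwadj m)
  have hcv : ∀ m, χ (w m) ≠ χ (Sum.inl v) := fun m h =>
    (hwadj m).ne' (hχ2 (Sum.inl v) (hmem m) (Set.mem_insert _ _) h)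
  have hcw : ∀ m m', χ (w m) = χ (w m') → m = m' := fun m m' h =>
    hwinj (hχ2 (Sum.inl v) (hmem m) (hmem m') h)
  have hinjN : ∀ c p q : GadgetVert G x, (gadgetGraph G x).Adj c p → (gadgetGraph G x).Adj c q →
      χ p = χ q → p = q := fun c p q h1 h2 h =>
    hχ2 c (Set.mem_insert_of_mem _ h1) (Set.mem_insert_of_mem _ h2) h
  have hinjS : ∀ c p : GadgetVert G x, (gadgetGraph G x).Adj c p → χ p = χ c → p = c :=
    fun c p h1 h => hχ2 c (Set.mem_insert_of_mem _ h1) (Set.mem_insert _ _) h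
  have hballv : ∀ (j₁ j₂ : Fin 6), AAdj 5 j₁ ∨ AAdj j₁ 5 → AAdj j₁ j₂ ∨ AAdj j₂ j₁ →
      j₁ ≠ 5 → j₂ ≠ j₁ →
      inGball G x r (Sum.inl v) (gv G x a v (x s(a,v) - 1) j₂ hp) := by
    intro j₁ j₂ h1 h2 hne1 hne2
    refine inGball_of_walk (SimpleGraph.Walk.cons adj_inl_gv5
      (SimpleGraph.Walk.cons (adj_gv h1 (Ne.symm hne1))
      (SimpleGraph.Walk.cons (adj_gv h2 (Ne.symm hne2)) SimpleGraph.Walk.nil))) ?_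
    rw [wW_cons, wW_cons, wW_cons, wW_nil]
    simp only [gv, wt_inr_inr, wt_inl]
    calc (1:ℝ≥0∞)/2 + (0 + (0+0)) ≤ 1 := by
          rw [add_zero, add_zero, add_zero]
          exact le_trans (ENNReal.half_le_self) le_rfl
      _ ≤ r := one_le_r hr
  have hball1lvl : ∀ (j₁ : Fin 6), AAdj 5 j₁ ∨ AAdj j₁ 5 → j₁ ≠ 5 →
      ∀ c : GadgetVert G x, (gadgetGraph G x).Adj c (Sum.inl v) →
      inGball G x r c (gv G x a v (x s(a,v) - 1) j₁ hp) := by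
    intro j₁ h1 hne1 c hadj
    refine inGball_of_walk (SimpleGraph.Walk.cons hadj (SimpleGraph.Walk.cons adj_inl_gv5
      (SimpleGraph.Walk.cons (adj_gv h1 (Ne.symm hne1)) SimpleGraph.Walk.nil))) ?_
    rw [wW_cons, wW_cons, wW_cons, wW_nil]
    simp only [gv, wt_inr_inr, wt_inl]
    calc wt G x c (Sum.inl v) + (1/2 + (0+0)) ≤ 1/2 + (1/2 + (0+0)) := by
          gcongr; exact wt_le_half _ _
      _ = 1 := by rw [add_zero, add_zero, one_div, ENNReal.inv_two_add_inv_two]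
      _ ≤ r := one_le_r hr
  have hzero : ∀ (j₁ j₂ : Fin 6) (h1 : AAdj j₁ j₂ ∨ AAdj j₂ j₁) (hne : j₁ ≠ j₂)
      (h2 : AAdj j₂ 5 ∨ AAdj 5 j₂) (hne2 : j₂ ≠ 5),
      inGball G x r (gv G x a v (x s(a,v) - 1) j₁ hp) (w i) := by
    intro j₁ j₂ h1 hne h2 hne2
    rw [hwi]
    refine inGball_of_walk (SimpleGraph.Walk.cons (adj_gv h1 hne)
      (SimpleGraph.Walk.cons (adj_gv h2 hne2) SimpleGraph.Walk.nil)) ?_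
    rw [wW_cons, wW_cons, wW_nil]
    simp only [gv, wt_inr_inr]
    simp
  have hzero3 : ∀ (j₁ j₂ j₃ : Fin 6) (h1 : AAdj j₁ j₂ ∨ AAdj j₂ j₁) (hne : j₁ ≠ j₂)
      (h2 : AAdj j₂ j₃ ∨ AAdj j₃ j₂) (hne2 : j₂ ≠ j₃)
      (h3 : AAdj j₃ 5 ∨ AAdj 5 j₃) (hne3 : j₃ ≠ 5),
      inGball G x r (gv G x a v (x s(a,v) - 1) j₁ hp) (w i) := by
    intro j₁ j₂ j₃ h1 hne h2 hne2 h3 hne3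
    rw [hwi]
    refine inGball_of_walk (SimpleGraph.Walk.cons (adj_gv h1 hne)
      (SimpleGraph.Walk.cons (adj_gv h2 hne2)
      (SimpleGraph.Walk.cons (adj_gv h3 hne3) SimpleGraph.Walk.nil))) ?_
    rw [wW_cons, wW_cons, wW_cons, wW_nil]
    simp only [gv, wt_inr_inr]
    simp
  rw [hwi] at hz
  rcases nbhd_Q5 hz with rfl | rfl | rfl
  · exact hcv j hcz.symm
  · -- z = Q3 (χ Q3 = C)  [mirror of z = P2]
    obtain ⟨m, hm, hcm⟩ := hχc (w j) (Sum.inl v) (hwadj j).symm _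
      (hball1lvl 3 (by decide) (by decide) _ (hwadj j).symm) hcz
    rcases nbhd3 hm with rfl | rfl | rfl
    · -- m = Q1, χ Q1 = A : continue
      obtain ⟨s, hs, hcs⟩ := hχc (Sum.inl v) (w i) (hwadj i) _
        (hballv 3 1 (by decide) (by decide) (by decide) (by decide)) hcm
      obtain ⟨q, hq, hcq⟩ := hχc (Sum.inl v) (w k) (hwadj k) _
        (hballv 3 1 (by decide) (by decide) (by decide) (by decide)) hcm
      rcases nbhd1 hs with rfl | rfl | rfl
      · -- s = Q0 : χ Q0 = B
        rcases nbhd1 hq with rfl | rfl | rfl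
        · exact hik (hcw i k (hcs.symm.trans hcq))
        · -- q = Q2 : χ Q2 = D ; edge (Q0,Q2), v' = w i
          obtain ⟨t, ht, hct⟩ := hχc _ _ (adj_gv (j:=0) (j':=2) (hp:=hp) (by decide) (by decide)) (w i)
            (hzero3 0 1 3 (by decide) (by decide) (by decide) (by decide) (by decide) (by decide))
            hcs.symm
          rw [hwi] at ht
          rcases nbhd_Q5 ht with rfl | rfl | rfl
          · exact hcv k (hct.trans hcq).symm
          ·
            exact hjk (hcw j k (hcz.symm.trans (hct.trans hcq)))
          · -- t = Q4 : χ Q4 = χ Q2 ; Q4 adj Q2 ⇒ hinjS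
            have := hinjS _ _ (adj_gv (j:=4) (j':=2) (by decide) (by decide)) hct.symm
            exact absurd (gv_inj this) (by decide)
        · exact hjk (hcw j k (hcz.symm.trans hcq))
      · -- s = Q2 : χ Q2 = B
        rcases nbhd1 hq with rfl | rfl | rfl
        · -- q = Q0 : χ Q0 = D ; edge (Q2,Q0), v' = w i
          obtain ⟨t, ht, hct⟩ := hχc _ _ (adj_gv (j:=2) (j':=0) (hp:=hp) (by decide) (by decide)) (w i)
            (hzero 2 4 (by decide) (by decide) (by decide) (by decide)) hcs.symm
          rw [hwi] at ht
          rcases nbhd_Q5 ht with rfl | rfl | rfl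
          · exact hcv k (hct.trans hcq).symm
          · exact hjk (hcw j k (hcz.symm.trans (hct.trans hcq)))
          · -- t = Q4 : χ Q4 = χ Q0 ; both nbrs of Q2
            have := hinjN _ _ _ (adj_gv (j:=2) (j':=4) (by decide) (by decide))
              (adj_gv (j:=2) (j':=0) (by decide) (by decide)) hct
            exact absurd (gv_inj this) (by decide)
        · exact hik (hcw i k (hcs.symm.trans hcq))
        · exact hjk (hcw j k (hcz.symm.trans hcq))
      · exact hij (hcw i j (hcs.symm.trans hcz))
    · -- m = Q4 : excluded via hinjN with inl v at center Q5
      exact gv_ne_inl (hinjN _ _ _ (adj_gv (j:=5) (j':=4) (by decide) (by decide))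
        adj_inl_gv5.symm hcm)
    · -- m = Q5 : χ Q5 = B ≠ A
      exact hcv i (by rw [hwi]; exact hcm)
  · -- z = Q4 (χ Q4 = C)  [mirror of z = P1]
    obtain ⟨m, hm, hcm⟩ := hχc (w j) (Sum.inl v) (hwadj j).symm _
      (hball1lvl 4 (by decide) (by decide) _ (hwadj j).symm) hcz
    rcases nbhd4 hm with rfl | rfl | rfl
    · -- m = Q2, χ Q2 = A : continue
      obtain ⟨s, hs, hcs⟩ := hχc (Sum.inl v) (w i) (hwadj i) _
        (hballv 4 2 (by decide) (by decide) (by decide) (by decide)) hcm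
      obtain ⟨q, hq, hcq⟩ := hχc (Sum.inl v) (w k) (hwadj k) _
        (hballv 4 2 (by decide) (by decide) (by decide) (by decide)) hcm
      rcases nbhd2 hs with rfl | rfl | rfl
      · -- s = Q0 : χ Q0 = B
        rcases nbhd2 hq with rfl | rfl | rfl
        · exact hik (hcw i k (hcs.symm.trans hcq))
        · -- q = Q1 : χ Q1 = D ; edge (Q0,Q1), v' = w i
          obtain ⟨t, ht, hct⟩ := hχc _ _ (adj_gv (j:=0) (j':=1) (hp:=hp) (by decide) (by decide)) (w i)
            (hzero3 0 1 3 (by decide) (by decide) (by decide) (by decide) (by decide) (by decide))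
            hcs.symm
          rw [hwi] at ht
          rcases nbhd_Q5 ht with rfl | rfl | rfl
          · exact hcv k (hct.trans hcq).symm
          · -- t = Q3 : χ Q3 = χ Q1 ; Q3 adj Q1 ⇒ hinjS
            have := hinjS _ _ (adj_gv (j:=3) (j':=1) (by decide) (by decide)) hct.symm
            exact absurd (gv_inj this) (by decide)
          · exact hjk (hcw j k (hcz.symm.trans (hct.trans hcq)))
        · exact hjk (hcw j k (hcz.symm.trans hcq))
      · -- s = Q1 : χ Q1 = B
        rcases nbhd2 hq with rfl | rfl | rfl
        · -- q = Q0 : χ Q0 = D ; edge (Q1,Q0), v' = w i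
          obtain ⟨t, ht, hct⟩ := hχc _ _ (adj_gv (j:=1) (j':=0) (hp:=hp) (by decide) (by decide)) (w i)
            (hzero 1 3 (by decide) (by decide) (by decide) (by decide)) hcs.symm
          rw [hwi] at ht
          rcases nbhd_Q5 ht with rfl | rfl | rfl
          · exact hcv k (hct.trans hcq).symm
          · -- t = Q3 : χ Q3 = χ Q0 ; both nbrs of Q1
            have := hinjN _ _ _ (adj_gv (j:=1) (j':=3) (by decide) (by decide))
              (adj_gv (j:=1) (j':=0) (by decide) (by decide)) hct
            exact absurd (gv_inj this) (by decide)
          · exact hjk (hcw j k (hcz.symm.trans (hct.trans hcq)))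
        · exact hik (hcw i k (hcs.symm.trans hcq))
        · exact hjk (hcw j k (hcz.symm.trans hcq))
      · exact hij (hcw i j (hcs.symm.trans hcz))
    · -- m = Q3 : excluded via hinjN with inl v at center Q5
      exact gv_ne_inl (hinjN _ _ _ (adj_gv (j:=5) (j':=3) (by decide) (by decide))
        adj_inl_gv5.symm hcm)
    · -- m = Q5 : χ Q5 = B ≠ A
      exact hcv i (by rw [hwi]; exact hcm)

lemma two_mul_div_two (c : ℝ≥0∞) : 2 * c / 2 = c := by
  rw [mul_comm, mul_div_assoc, ENNReal.div_self two_ne_zero ENNReal.ofNat_ne_top, mul_one]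

lemma two_r_half (r : ℕ) : ((2*r : ℕ) : ℝ≥0∞)/2 = r := by
  push_cast
  rw [two_mul_div_two]

lemma lt_of_half_lt {n m : ℕ} (h : (n:ℝ≥0∞)/2 < (m:ℝ≥0∞)/2) : n < m := by
  by_contra hc
  push_neg at hc
  exact absurd (ENNReal.div_le_div_right (by exact_mod_cast hc) 2) (not_le.mpr h)

lemma ball_back {r : ℕ} {v : V} {u t : GadgetVert G x} (hu : ∃ p, u = Sum.inr p)
    (hball : inGball G x r (Sum.inl v) u) (ht : (gadgetGraph G x).Adj (Sum.inl v) t) :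
    inGball G x r u t := by
  obtain ⟨pp, rfl⟩ := hu
  have h1 : gdist G x (Sum.inl v) (Sum.inr pp) < (r:ℝ≥0∞) + 1/2 :=
    lt_of_le_of_lt hball (ENNReal.lt_add_right (ENNReal.natCast_ne_top r) (by norm_num))
  obtain ⟨q, hq0⟩ := iInf_lt_iff.mp h1
  have hq : wW G x q < (r:ℝ≥0∞) + 1/2 := hq0
  obtain ⟨n, hn, hpar⟩ := wW_parity q
  have hgg : (gg (Sum.inl v : GadgetVert G x) + gg (Sum.inr pp : GadgetVert G x)) % 2 = 1 := rfl
  rw [hgg] at hpar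
  have heq : (r:ℝ≥0∞) + 1/2 = ((2*r+1 : ℕ) : ℝ≥0∞)/2 := by
    push_cast
    rw [ENNReal.add_div, two_mul_div_two]
  rw [hn, heq] at hq
  have hlt : n < 2*r+1 := lt_of_half_lt hq
  have hle : n + 1 ≤ 2*r := by omega
  refine inGball_of_walk (q.reverse.append (SimpleGraph.Walk.cons ht SimpleGraph.Walk.nil)) ?_
  rw [wW_append, wW_reverse, hn, wW_cons, wW_nil, wt_inl, add_zero]
  have h2 : ((n:ℝ≥0∞)/2) + 1/2 = ((n+1:ℕ):ℝ≥0∞)/2 := by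
    push_cast
    rw [ENNReal.add_div]
  rw [h2, ← two_r_half r]
  exact ENNReal.div_le_div_right (by exact_mod_cast hle) 2


theorem stmt1 (G : SimpleGraph V) (x : Sym2 V → ℕ) (r : ℕ) (hr : 0 < r)
    (hgad : CorrectlyGadgeted G x r)
    (χ : GadgetVert G x → ℕ)
    (hχ2 : Dist2Coloring G x χ)
    (hχc : EdgeConsistent G x r χ)
    (v : V) (w : Fin 3 → GadgetVert G x) (hwinj : Function.Injective w)
    (hwadj : ∀ i, (gadgetGraph G x).Adj (Sum.inl v) (w i)) :
    ¬ ∃ (u₁ u₂ : GadgetVert G x) (i j : Fin 3), i ≠ j ∧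
        (gadgetGraph G x).Adj u₁ u₂ ∧
        inGball G x r (Sum.inl v) u₁ ∧ inGball G x r (Sum.inl v) u₂ ∧
        χ u₁ = χ (w i) ∧ χ u₂ = χ (w j) := by
  rintro ⟨u₁, u₂, i, j, hij, hadj, hb1, hb2, hc1, hc2⟩
  have hex : ∀ i j : Fin 3, i ≠ j → ∃ k, k ≠ i ∧ k ≠ j := by decide
  obtain ⟨k, hki, hkj⟩ := hex i j hij
  -- dispatcher given z adjacent to w i' colored like w j'
  have disp : ∀ (i' j' : Fin 3), i' ≠ j' → k ≠ i' → k ≠ j' →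
      ∀ z : GadgetVert G x, (gadgetGraph G x).Adj (w i') z → χ z = χ (w j') → False := by
    intro i' j' hij' hki' hkj' z hz hcz
    obtain ⟨a, b, i0, j0, hp, heq, hcase⟩ := adj_inl_iff (hwadj i')
    rcases hcase with ⟨rfl, rfl, rfl⟩ | ⟨rfl, rfl, rfl⟩
    · exact keyP G x r hr χ hχ2 hχc v b hp w hwinj hwadj i' j' k hij' (Ne.symm hki')
        (Ne.symm hkj') heq z hz hcz
    · exact keyQ G x r hr χ hχ2 hχc a v hp w hwinj hwadj i' j' k hij' (Ne.symm hki')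
        (Ne.symm hkj') heq z hz hcz
  cases u₁ with
  | inr p1 =>
    obtain ⟨z, hz, hcz⟩ := hχc _ u₂ hadj (w i) (ball_back ⟨p1, rfl⟩ hb1 (hwadj i)) hc1.symm
    exact disp i j hij hki hkj z hz (hcz.trans hc2)
  | inl s1 =>
    cases u₂ with
    | inl s2 => exact no_inl_inl_adj s1 s2 hadj
    | inr p2 =>
      obtain ⟨z, hz, hcz⟩ := hχc _ _ hadj.symm (w j) (ball_back ⟨p2, rfl⟩ hb2 (hwadj j)) hc2.symm
      exact disp j i (Ne.symm hij) hkj hki z hz (hcz.trans hc1)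

end LCLGadgetThms
end

section
/- Let r be a positive integer, let G' be a correctly gadgeted graph for parameter r, and let χ : V(G') → ℕ be a labeling that is a distance-2 coloring and is edge-consistent in every r-gball. Let v be an original vertex of G'. Then there is no triple of vertices u1, u2, u3 in gball_r(v) with {u1,u2}, {u1,u3}, {u2,u3} ∈ E(G') and χ(u1) = χ(v); i.e., no vertex lying on a triangle inside gball_r(v) has the same color as the original vertex v. -/
open scoped ENNReal

/-!
Let u₁u₂u₃ be a triangle in the ball with χ(u₁) = χ(v). Original vertices lie on no triangle,
so u₂ is a gadget vertex. Edge consistency at u₁ gives neighbours W₂, W₃ of v coloured like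
u₂, u₃; since gadgeted distances from v to gadget vertices are odd multiples of 1/2, W₂ still
lies in the r-gball of u₂, so W₂ has a neighbour coloured like u₃. Up to an automorphism of the
A-gadget `c` containing W₂ = c 0 (indices 0–5 as in `AAdj`), that neighbour is c 1. Chasing
colours through the gadget forces χ(c 3) = χ(v) and then χ(c 5) = χ(c 0), and edge consistency
at c 0 finally makes the single neighbour of c 5 outside the gadget carry the colours of both
c 1 and c 2, which are adjacent.
-/

namespace LCLGadget
open SimpleGraph Sum

def aGadget : SimpleGraph (Fin 6) := SimpleGraph.fromRel AAdj

instance : DecidableRel AAdj := fun _ _ => List.instDecidableMemOfLawfulBEq _ _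

instance : DecidableRel aGadget.Adj := fun i j =>
  inferInstanceAs (Decidable (i ≠ j ∧ (AAdj i j ∨ AAdj j i)))

def aGadget.rev : aGadget ≃g aGadget :=
  { Fin.revPerm with map_rel_iff' := by decide }

def aGadget.swapPaths : aGadget ≃g aGadget :=
  { Equiv.swap (1 : Fin 6) 2 * Equiv.swap 3 4 with map_rel_iff' := by decide }

lemma aGadget.eq_zero_or_eq_five_iff (j : Fin 6) :
    j = 0 ∨ j = 5 ↔ ∀ k l, aGadget.Adj j k → aGadget.Adj j l → k = l ∨ aGadget.Adj k l := by
  revert j; decide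

lemma aGadget.iso_apply_eq_zero_or_eq_five_iff (σ : aGadget ≃g aGadget) (j : Fin 6) :
    σ j = 0 ∨ σ j = 5 ↔ j = 0 ∨ j = 5 := by
  rw [aGadget.eq_zero_or_eq_five_iff, aGadget.eq_zero_or_eq_five_iff, σ.surjective.forall₂]
  simp only [σ.map_adj_iff, σ.injective.eq_iff]

lemma aGadget.not_adj_of_eq_zero_or_eq_five {j k : Fin 6} (hj : j = 0 ∨ j = 5)
    (hk : k = 0 ∨ k = 5) : ¬ aGadget.Adj j k := by
  revert j k; decide

lemma aGadget.adj_zero {k : Fin 6} : aGadget.Adj 0 k → k = 1 ∨ k = 2 := by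
  revert k; decide

lemma aGadget.adj_one {k : Fin 6} : aGadget.Adj 1 k → k = 0 ∨ k = 2 ∨ k = 3 := by
  revert k; decide

lemma aGadget.adj_three {k : Fin 6} : aGadget.Adj 3 k → k = 1 ∨ k = 4 ∨ k = 5 := by
  revert k; decide

lemma aGadget.adj_five {k : Fin 6} : aGadget.Adj 5 k → k = 3 ∨ k = 4 := by
  revert k; decide

variable {V : Type} [LinearOrder V] {G : SimpleGraph V} {x : Sym2 V → ℕ}

abbrev index (p : GadgetAux G x) : Fin 6 := p.1.2.2.2

def sibling (p : GadgetAux G x) (k : Fin 6) : GadgetAux G x :=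
  ⟨(p.1.1, p.1.2.1, p.1.2.2.1, k), p.2⟩

lemma sibling_self (p : GadgetAux G x) : sibling p (index p) = p := rfl

@[simp] lemma sibling_sibling (p : GadgetAux G x) (j k : Fin 6) :
    sibling (sibling p j) k = sibling p k := rfl

lemma sibling_injective (p : GadgetAux G x) : Function.Injective (sibling p) := by
  intro j k h
  simpa [sibling] using congrArg index h

lemma adj_sibling_iff {p : GadgetAux G x} {j k : Fin 6} :
    (gadgetGraph G x).Adj (inr (sibling p j)) (inr (sibling p k)) ↔ aGadget.Adj j k := by
  simp [gadgetGraph, aGadget, gadgetRel, sibling]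

lemma not_adj_inl_inl (a b : V) : ¬ (gadgetGraph G x).Adj (inl a) (inl b) := by
  simp [gadgetGraph, gadgetRel]

lemma index_eq_zero_or_eq_five_of_adj_of_forall_ne {p : GadgetAux G x} {n : GadgetVert G x}
    (h : (gadgetGraph G x).Adj (inr p) n) (hn : ∀ k, n ≠ inr (sibling p k)) :
    index p = 0 ∨ index p = 5 := by
  obtain ⟨⟨a, b, i, j⟩, hp⟩ := p
  rcases n with s | ⟨⟨a', b', i', j'⟩, hq⟩ <;>
    simp [gadgetGraph, gadgetRel, sibling] at h hn ⊢ <;> grind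

lemma eq_of_adj_of_forall_ne_sibling {p : GadgetAux G x} {n m : GadgetVert G x}
    (hn : (gadgetGraph G x).Adj (inr p) n) (hm : (gadgetGraph G x).Adj (inr p) m)
    (hn' : ∀ k, n ≠ inr (sibling p k)) (hm' : ∀ k, m ≠ inr (sibling p k)) : n = m := by
  obtain ⟨⟨a, b, i, j⟩, hp⟩ := p
  rcases n with s | ⟨⟨a', b', i', j'⟩, hq⟩ <;> rcases m with t | ⟨⟨a'', b'', i'', j''⟩, hq'⟩ <;>
    simp [gadgetGraph, gadgetRel, sibling] at hn hm hn' hm' ⊢ <;> grind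

lemma exists_eq_inr_of_adj_inl {v : V} {w : GadgetVert G x}
    (h : (gadgetGraph G x).Adj (inl v) w) : ∃ p, w = inr p := by
  rcases w with a | p
  · exact absurd h (not_adj_inl_inl v a)
  · exact ⟨p, rfl⟩

lemma not_adj_of_adj_inl {w : V} {y z : GadgetVert G x} (hy : (gadgetGraph G x).Adj (inl w) y)
    (hz : (gadgetGraph G x).Adj (inl w) z) : ¬ (gadgetGraph G x).Adj y z := by
  intro hyz
  obtain ⟨p, rfl⟩ := exists_eq_inr_of_adj_inl hy
  have hp := index_eq_zero_or_eq_five_of_adj_of_forall_ne hy.symm (by simp)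
  by_cases hsib : ∃ k, z = inr (sibling p k)
  · obtain ⟨k, rfl⟩ := hsib
    have hk : k = 0 ∨ k = 5 := index_eq_zero_or_eq_five_of_adj_of_forall_ne hz.symm (by simp)
    have hjk := (adj_sibling_iff (p := p) (j := index p)).1 hyz
    exact aGadget.not_adj_of_eq_zero_or_eq_five hp hk hjk
  · rw [not_exists] at hsib
    exact hz.ne (eq_of_adj_of_forall_ne_sibling hy.symm hyz (by simp) hsib)

structure IsGadgetCopy (c : Fin 6 → GadgetAux G x) : Prop where
  injective : Function.Injective c
  adj_iff (j k : Fin 6) : (gadgetGraph G x).Adj (inr (c j)) (inr (c k)) ↔ aGadget.Adj j k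
  exists_eq_of_adj {j : Fin 6} {n : GadgetVert G x} (hj : j ≠ 0 ∧ j ≠ 5) :
    (gadgetGraph G x).Adj (inr (c j)) n → ∃ k, n = inr (c k)
  eq_of_adj_of_forall_ne {j : Fin 6} {n m : GadgetVert G x} :
    (gadgetGraph G x).Adj (inr (c j)) n → (gadgetGraph G x).Adj (inr (c j)) m →
      (∀ k, n ≠ inr (c k)) → (∀ k, m ≠ inr (c k)) → n = m

lemma isGadgetCopy_sibling_comp (p : GadgetAux G x) (σ : aGadget ≃g aGadget) :
    IsGadgetCopy (sibling p ∘ σ) where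
  injective := (sibling_injective p).comp σ.injective
  adj_iff j k := adj_sibling_iff.trans σ.map_adj_iff
  exists_eq_of_adj {j n} hj h := by
    by_contra! hn
    have := index_eq_zero_or_eq_five_of_adj_of_forall_ne h fun k hk =>
      hn (σ.symm k) (by simpa using hk)
    exact hj.1 ((aGadget.iso_apply_eq_zero_or_eq_five_iff σ j).1 this |>.resolve_right hj.2)
  eq_of_adj_of_forall_ne {j n m} hn hm hn' hm' := by
    refine eq_of_adj_of_forall_ne_sibling hn hm (fun k hk => hn' (σ.symm k) ?_)
      (fun k hk => hm' (σ.symm k) ?_) <;> simpa using hk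

lemma exists_isGadgetCopy {v : V} {w : GadgetAux G x} {E : GadgetVert G x}
    (hv : (gadgetGraph G x).Adj (inl v) (inr w)) (hE : (gadgetGraph G x).Adj (inr w) E)
    (hEv : E ≠ inl v) : ∃ c, IsGadgetCopy c ∧ c 0 = w ∧ E = inr (c 1) := by
  obtain ⟨τ, hτ⟩ : ∃ τ : aGadget ≃g aGadget, τ 0 = index w := by
    rcases index_eq_zero_or_eq_five_of_adj_of_forall_ne hv.symm (by simp) with h | h
    · exact ⟨RelIso.refl _, h.symm⟩
    · exact ⟨aGadget.rev, h.symm⟩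
  obtain ⟨k, rfl⟩ : ∃ k, E = inr (sibling w k) := by
    by_contra! hE'
    exact hEv (eq_of_adj_of_forall_ne_sibling hE hv.symm hE' (by simp))
  have hk : aGadget.Adj 0 (τ.symm k) := by
    rw [← τ.map_adj_iff, τ.apply_symm_apply, hτ]
    exact (adj_sibling_iff (p := w) (j := index w)).1 hE
  obtain ⟨σ, hσ0, hσ1⟩ : ∃ σ : aGadget ≃g aGadget, σ 0 = index w ∧ σ 1 = k := by
    rcases aGadget.adj_zero hk with h | h
    · exact ⟨τ, hτ, by rw [← h, τ.apply_symm_apply]⟩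
    · exact ⟨aGadget.swapPaths.trans τ, hτ, by
        change τ (aGadget.swapPaths 1) = k
        rw [show aGadget.swapPaths 1 = 2 by decide, ← h, τ.apply_symm_apply]⟩
  exact ⟨sibling w ∘ σ, isGadgetCopy_sibling_comp w σ, by simp [hσ0, sibling_self],
    by simp [hσ1]⟩

@[simp] lemma wt_inl_left (a : V) (w : GadgetVert G x) : wt G x (inl a) w = 1 / 2 := by
  cases w <;> rfl

@[simp] lemma wt_inl_right (u : GadgetVert G x) (a : V) : wt G x u (inl a) = 1 / 2 := by
  cases u <;> rfl

@[simp] lemma wt_inr_inr (p q : GadgetAux G x) : wt G x (inr p) (inr q) = 0 := rfl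

lemma wt_comm (u w : GadgetVert G x) : wt G x u w = wt G x w u := by
  cases u <;> cases w <;> rfl

noncomputable def walkWeight {u w : GadgetVert G x} (p : (gadgetGraph G x).Walk u w) : ℝ≥0∞ :=
  (p.darts.map fun d => wt G x d.toProd.1 d.toProd.2).sum

@[simp] lemma walkWeight_nil {u : GadgetVert G x} :
    walkWeight (Walk.nil : (gadgetGraph G x).Walk u u) = 0 := by
  simp [walkWeight]

@[simp] lemma walkWeight_cons {u v w : GadgetVert G x} (h : (gadgetGraph G x).Adj u v)
    (p : (gadgetGraph G x).Walk v w) :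
    walkWeight (Walk.cons h p) = wt G x u v + walkWeight p := by
  simp [walkWeight]

@[simp] lemma walkWeight_append {u v w : GadgetVert G x} (p : (gadgetGraph G x).Walk u v)
    (q : (gadgetGraph G x).Walk v w) : walkWeight (p.append q) = walkWeight p + walkWeight q := by
  simp [walkWeight]

@[simp] lemma walkWeight_reverse {u w : GadgetVert G x} (p : (gadgetGraph G x).Walk u w) :
    walkWeight p.reverse = walkWeight p := by
  simp [walkWeight, Function.comp_def, wt_comm]

lemma gdist_le_walkWeight {u w : GadgetVert G x} (p : (gadgetGraph G x).Walk u w) :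
    gdist G x u w ≤ walkWeight p :=
  iInf_le _ p

lemma gdist_comm (u w : GadgetVert G x) : gdist G x u w = gdist G x w u := by
  have key : ∀ a b : GadgetVert G x, gdist G x a b ≤ gdist G x b a := fun a b =>
    le_iInf fun p => (gdist_le_walkWeight p.reverse).trans_eq (walkWeight_reverse p)
  exact (key u w).antisymm (key w u)

lemma inGball_comm {r : ℕ} {u w : GadgetVert G x} :
    inGball G x r u w ↔ inGball G x r w u := by
  rw [inGball, inGball, gdist_comm]

lemma exists_walkWeight_eq {u w : GadgetVert G x} (p : (gadgetGraph G x).Walk u w) :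
    ∃ m : ℕ, walkWeight p = m + if u.isLeft = w.isLeft then 0 else 1 / 2 := by
  induction p with
  | nil => exact ⟨0, by simp⟩
  | @cons u u' w h p ih =>
    obtain ⟨m, hm⟩ := ih
    rw [walkWeight_cons, hm]
    rcases u with a | q <;> rcases u' with a' | q'
    · exact absurd h (not_adj_inl_inl a a')
    all_goals rcases w with b | r <;> simp
    all_goals first
      | exact ⟨m, add_comm _ _⟩
      | exact ⟨m + 1, by
          rw [add_left_comm, ENNReal.inv_two_add_inv_two, Nat.cast_succ, add_comm]⟩

lemma inGball_of_adj_inl {r : ℕ} {v : V} {p : GadgetAux G x} {W : GadgetVert G x}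
    (hp : inGball G x r (inl v) (inr p)) (hW : (gadgetGraph G x).Adj (inl v) W) :
    inGball G x r (inr p) W := by
  obtain ⟨q, hq⟩ : ∃ q : (gadgetGraph G x).Walk (inl v) (inr p), walkWeight q < r + 1 / 2 :=
    iInf_lt_iff.1 (hp.trans_lt (ENNReal.lt_add_right (ENNReal.natCast_ne_top r) (by norm_num)))
  obtain ⟨m, hm⟩ := exists_walkWeight_eq q
  simp only [isLeft_inl, isLeft_inr, Bool.true_eq_false, if_false] at hm
  have hmr : m + 1 ≤ r := by
    rw [hm, ENNReal.add_lt_add_iff_right (by norm_num)] at hq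
    exact_mod_cast hq
  calc gdist G x (inr p) W ≤ walkWeight (q.reverse.append (Walk.cons hW Walk.nil)) :=
        gdist_le_walkWeight _
    _ = m + 1 := by
        simp only [walkWeight_append, walkWeight_reverse, hm, walkWeight_cons, wt_inl_left,
          walkWeight_nil, add_zero, add_assoc, ENNReal.add_halves]
    _ ≤ r := by exact_mod_cast hmr

lemma Dist2Coloring.ne_of_adj {χ : GadgetVert G x → ℕ} (hχ : Dist2Coloring G x χ)
    {u w : GadgetVert G x} (h : (gadgetGraph G x).Adj u w) : χ u ≠ χ w :=
  fun he => h.ne (hχ u (Set.mem_insert _ _) (Set.mem_insert_of_mem _ h) he)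

lemma Dist2Coloring.ne_of_adj_of_adj {χ : GadgetVert G x → ℕ} (hχ : Dist2Coloring G x χ)
    {u w₁ w₂ : GadgetVert G x} (h₁ : (gadgetGraph G x).Adj u w₁)
    (h₂ : (gadgetGraph G x).Adj u w₂) (hne : w₁ ≠ w₂) : χ w₁ ≠ χ w₂ :=
  fun he => hne (hχ u (Set.mem_insert_of_mem _ h₁) (Set.mem_insert_of_mem _ h₂) he)

namespace IsGadgetCopy

variable {c : Fin 6 → GadgetAux G x} {χ : GadgetVert G x → ℕ} {r : ℕ} {v : V}

lemma adj (hc : IsGadgetCopy c) (j k : Fin 6) (h : aGadget.Adj j k := by decide) :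
    (gadgetGraph G x).Adj (inr (c j)) (inr (c k)) :=
  (hc.adj_iff j k).2 h

lemma exists_adj_eq (hc : IsGadgetCopy c) {j : Fin 6} {n : GadgetVert G x} (hj : j ≠ 0 ∧ j ≠ 5)
    (h : (gadgetGraph G x).Adj (inr (c j)) n) : ∃ k, aGadget.Adj j k ∧ n = inr (c k) := by
  obtain ⟨k, rfl⟩ := hc.exists_eq_of_adj hj h
  exact ⟨k, (hc.adj_iff j k).1 h, rfl⟩

lemma inr_ne (hc : IsGadgetCopy c) {j k : Fin 6} (h : j ≠ k) :
    (inr (c j) : GadgetVert G x) ≠ inr (c k) :=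
  fun he => h (hc.injective (inr_injective he))

lemma color_five_eq (hc : IsGadgetCopy c) (hr : 0 < r) (hχ2 : Dist2Coloring G x χ)
    (hχc : EdgeConsistent G x r χ) (hv : (gadgetGraph G x).Adj (inl v) (inr (c 0)))
    (h10 : χ (inr (c 1)) ≠ χ (inr (c 0))) (h3v : χ (inr (c 3)) = χ (inl v)) :
    χ (inr (c 5)) = χ (inr (c 0)) := by
  have hball : inGball G x r (inl v) (inr (c 3)) := by
    refine (gdist_le_walkWeight
      (Walk.cons hv (Walk.cons (hc.adj 0 1) (Walk.cons (hc.adj 1 3) Walk.nil)))).trans ?_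
    simp only [walkWeight_cons, wt_inl_left, wt_inr_inr, walkWeight_nil, add_zero]
    exact ENNReal.half_le_self.trans (Nat.one_le_cast.2 hr)
  obtain ⟨n, hn, hχn⟩ := hχc _ _ hv _ hball h3v
  obtain ⟨k, hk, rfl⟩ := hc.exists_adj_eq (by decide) hn
  rcases aGadget.adj_three hk with rfl | rfl | rfl
  · exact absurd hχn h10
  · exact absurd hχn (hχ2.ne_of_adj_of_adj (hc.adj 2 4) (hc.adj 2 0) (hc.inr_ne (by decide)))
  · exact hχn

lemma color_three_ne (hc : IsGadgetCopy c) (hr : 0 < r) (hχ2 : Dist2Coloring G x χ)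
    (hχc : EdgeConsistent G x r χ) (hv : (gadgetGraph G x).Adj (inl v) (inr (c 0)))
    (h10 : χ (inr (c 1)) ≠ χ (inr (c 0))) (h1v : χ (inr (c 1)) ≠ χ (inl v)) :
    χ (inr (c 3)) ≠ χ (inl v) := by
  intro h3v
  have h50 := hc.color_five_eq hr hχ2 hχc hv h10 h3v
  have hball : inGball G x r (inr (c 0)) (inr (c 5)) := by
    refine (gdist_le_walkWeight (Walk.cons (hc.adj 0 1)
      (Walk.cons (hc.adj 1 3) (Walk.cons (hc.adj 3 5) Walk.nil)))).trans ?_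
    simp
  obtain ⟨n₁, hn₁, hχn₁⟩ := hχc _ _ (hc.adj 0 1) _ hball h50
  obtain ⟨n₂, hn₂, hχn₂⟩ := hχc _ _ (hc.adj 0 2) _ hball h50
  have hout₁ : ∀ k, n₁ ≠ inr (c k) := by
    rintro k rfl
    rcases aGadget.adj_five ((hc.adj_iff 5 k).1 hn₁) with rfl | rfl
    · exact h1v (hχn₁.symm.trans h3v)
    · exact hχ2.ne_of_adj_of_adj (hc.adj 2 4) (hc.adj 2 1) (hc.inr_ne (by decide)) hχn₁
  have hout₂ : ∀ k, n₂ ≠ inr (c k) := by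
    rintro k rfl
    rcases aGadget.adj_five ((hc.adj_iff 5 k).1 hn₂) with rfl | rfl
    · exact hχ2.ne_of_adj_of_adj (hc.adj 0 2) hv.symm inr_ne_inl (hχn₂.symm.trans h3v)
    · exact hχ2.ne_of_adj (hc.adj 4 2) hχn₂
  refine hχ2.ne_of_adj (hc.adj 1 2) ?_
  rw [← hχn₁, ← hχn₂, hc.eq_of_adj_of_forall_ne hn₁ hn₂ hout₁ hout₂]

lemma color_one_ne_of_adj (hc : IsGadgetCopy c) (hr : 0 < r) (hχ2 : Dist2Coloring G x χ)
    (hχc : EdgeConsistent G x r χ) (hv : (gadgetGraph G x).Adj (inl v) (inr (c 0)))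
    {W : GadgetVert G x} (hW : (gadgetGraph G x).Adj (inl v) W)
    (h10 : χ (inr (c 1)) ≠ χ (inr (c 0))) : χ (inr (c 1)) ≠ χ W := by
  intro h1W
  have hball : inGball G x r W (inr (c 1)) := by
    refine (gdist_le_walkWeight
      (Walk.cons hW.symm (Walk.cons hv (Walk.cons (hc.adj 0 1) Walk.nil)))).trans ?_
    simp only [walkWeight_cons, wt_inl_left, wt_inl_right, wt_inr_inr, walkWeight_nil, add_zero,
      ENNReal.add_halves]
    exact Nat.one_le_cast.2 hr
  obtain ⟨y, hy, hχy⟩ := hχc W (inl v) hW.symm _ hball h1W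
  obtain ⟨k, hk, rfl⟩ := hc.exists_adj_eq (by decide) hy
  rcases aGadget.adj_one hk with rfl | rfl | rfl
  · exact hχ2.ne_of_adj hv hχy.symm
  · exact hχ2.ne_of_adj_of_adj (hc.adj 0 2) hv.symm inr_ne_inl hχy
  · exact hc.color_three_ne hr hχ2 hχc hv h10 (h1W ▸ (hχ2.ne_of_adj hW).symm) hχy

end IsGadgetCopy

end LCLGadget

namespace LCLGadgetThms
open LCLGadget

variable {V : Type} [LinearOrder V]

theorem stmt2_general (G : SimpleGraph V) (x : Sym2 V → ℕ) (r : ℕ) (hr : 0 < r)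
    (χ : GadgetVert G x → ℕ)
    (hχ2 : Dist2Coloring G x χ)
    (hχc : EdgeConsistent G x r χ)
    (v : V) :
    ¬ ∃ u₁ u₂ u₃ : GadgetVert G x,
        inGball G x r (Sum.inl v) u₁ ∧ inGball G x r (Sum.inl v) u₂ ∧
        inGball G x r (Sum.inl v) u₃ ∧
        (gadgetGraph G x).Adj u₁ u₂ ∧ (gadgetGraph G x).Adj u₁ u₃ ∧
        (gadgetGraph G x).Adj u₂ u₃ ∧ χ u₁ = χ (Sum.inl v) := by
  rintro ⟨u₁, u₂, u₃, hb₁, hb₂, -, h₁₂, h₁₃, h₂₃, hχ₁⟩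
  obtain ⟨p₂, rfl⟩ : ∃ p, u₂ = Sum.inr p := by
    rcases u₂ with w | p
    · exact absurd h₁₃ (not_adj_of_adj_inl h₁₂.symm h₂₃)
    · exact ⟨p, rfl⟩
  have hv₁ : inGball G x r u₁ (Sum.inl v) := inGball_comm.1 hb₁
  obtain ⟨W₂, hvW₂, hχW₂⟩ := hχc u₁ _ h₁₂ (Sum.inl v) hv₁ hχ₁.symm
  obtain ⟨W₃, hvW₃, hχW₃⟩ := hχc u₁ u₃ h₁₃ (Sum.inl v) hv₁ hχ₁.symm
  obtain ⟨E, hE, hχE⟩ := hχc _ u₃ h₂₃ W₂ (inGball_of_adj_inl hb₂ hvW₂) hχW₂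
  have hEv : E ≠ Sum.inl v := by
    rintro rfl
    exact hχ2.ne_of_adj h₁₃ (hχ₁.trans hχE)
  obtain ⟨w, rfl⟩ := exists_eq_inr_of_adj_inl hvW₂
  obtain ⟨c, hc, rfl, rfl⟩ := exists_isGadgetCopy hvW₂ hE hEv
  refine hc.color_one_ne_of_adj hr hχ2 hχc hvW₂ hvW₃ ?_ (hχE.trans hχW₃.symm)
  rw [hχE, hχW₂]
  exact (hχ2.ne_of_adj h₂₃).symm

theorem stmt2 (G : SimpleGraph V) (x : Sym2 V → ℕ) (r : ℕ) (hr : 0 < r)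
    (hgad : CorrectlyGadgeted G x r)
    (χ : GadgetVert G x → ℕ)
    (hχ2 : Dist2Coloring G x χ)
    (hχc : EdgeConsistent G x r χ)
    (v : V) :
    ¬ ∃ u₁ u₂ u₃ : GadgetVert G x,
        inGball G x r (Sum.inl v) u₁ ∧ inGball G x r (Sum.inl v) u₂ ∧
        inGball G x r (Sum.inl v) u₃ ∧
        (gadgetGraph G x).Adj u₁ u₂ ∧ (gadgetGraph G x).Adj u₁ u₃ ∧
        (gadgetGraph G x).Adj u₂ u₃ ∧ χ u₁ = χ (Sum.inl v) :=
  stmt2_general G x r hr χ hχ2 hχc v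

end LCLGadgetThms
end

section
/- Let r be a positive integer, let G' be a correctly gadgeted graph for parameter r, and let χ : V(G') → ℕ be a labeling that is a distance-2 coloring and is edge-consistent in every r-gball. Let v be an original vertex of G'. Then for every inner or outer vertex u in gball_r(v), χ(u) ≠ χ(v). -/
open scoped ENNReal

namespace LCLGadgetThms
open LCLGadget

variable {V : Type} [LinearOrder V]

/-!
Let `u` be a gadget vertex with `χ u = χ v`. In the A-gadget of `u` it lies on a triangle
`u t₁ t₂` with a tail `t₁ q₂ q₃`; these five vertices are pairwise at distance at most two, so
they carry five distinct colours, and they are joined by weight-zero edges. A walk from an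
original vertex to a gadget vertex has odd weight in units of `1/2`, so `gdist v u + 1/2 ≤ r`,
and therefore the whole A-gadget attached to `v` lies in the `r`-gball of each of the five
vertices. Edge-consistency along `u t₁` gives `v` a neighbour coloured `χ t₁`, the first vertex
of such a gadget; consistency along the edges of the triangle and of the tail then forces
colours around that gadget until one of its vertices lacks a required neighbour colour.
-/

instance : DecidableRel AAdj := fun i j => inferInstanceAs (Decidable ((i, j) ∈ _))

def aGadget : SimpleGraph (Fin 6) := SimpleGraph.fromRel AAdj

instance : DecidableRel aGadget.Adj :=
  inferInstanceAs (DecidableRel (SimpleGraph.fromRel AAdj).Adj)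

def AGadgetWithinTwo (i i' : Fin 6) : Prop :=
  i ≠ i' ∧ (aGadget.Adj i i' ∨ ∃ k, aGadget.Adj k i ∧ aGadget.Adj k i')

instance : DecidableRel AGadgetWithinTwo := fun _ _ => inferInstanceAs (Decidable (_ ∧ _))

theorem aGadget_connected : aGadget.Connected := by decide

theorem aGadget_adj_rev {j j' : Fin 6} : aGadget.Adj j.rev j'.rev ↔ aGadget.Adj j j' := by
  revert j j'; decide

def aGadgetSwap : Equiv.Perm (Fin 6) := (Equiv.swap 1 2).trans (Equiv.swap 3 4)

theorem aGadget_adj_swap {j j' : Fin 6} :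
    aGadget.Adj (aGadgetSwap j) (aGadgetSwap j') ↔ aGadget.Adj j j' := by
  revert j j'; decide

theorem aGadget_exists_triangle_tail (j : Fin 6) :
    ∃ t₁ t₂ q₂ q₃ : Fin 6, aGadget.Adj j t₁ ∧ aGadget.Adj t₁ t₂ ∧ aGadget.Adj t₂ j ∧
      aGadget.Adj t₁ q₂ ∧ aGadget.Adj q₂ q₃ ∧ [j, t₁, t₂, q₂, q₃].Pairwise AGadgetWithinTwo := by
  revert j; decide

section GadgetCopies

variable {W : Type*} {H : SimpleGraph W} {χ : W → ℕ}

theorem color_ne_of_adj (hχ : ∀ z, Set.InjOn χ (insert z (H.neighborSet z))) {a b : W}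
    (h : H.Adj a b) : χ a ≠ χ b := fun hc =>
  h.ne (hχ a (Set.mem_insert a _) (Set.mem_insert_of_mem a h) hc)

theorem color_ne_of_adj_of_adj (hχ : ∀ z, Set.InjOn χ (insert z (H.neighborSet z)))
    {z a b : W} (ha : H.Adj z a) (hb : H.Adj z b) (hab : a ≠ b) : χ a ≠ χ b := fun hc =>
  hab (hχ z (Set.mem_insert_of_mem z ha) (Set.mem_insert_of_mem z hb) hc)

structure GadgetCopy (H : SimpleGraph W) where
  vert : Fin 6 → W
  entry : W
  exit : W
  vert_injective : Function.Injective vert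
  entry_ne_vert : ∀ j, entry ≠ vert j
  exit_ne_vert : ∀ j, exit ≠ vert j
  adj_vert : ∀ {j j'}, aGadget.Adj j j' → H.Adj (vert j) (vert j')
  adj_entry : H.Adj (vert 0) entry
  adj_exit : H.Adj (vert 5) exit
  eq_of_adj_vert : ∀ {j y}, H.Adj (vert j) y →
    (∃ j', aGadget.Adj j j' ∧ y = vert j') ∨ (j = 0 ∧ y = entry) ∨ (j = 5 ∧ y = exit)

namespace GadgetCopy

variable (g : GadgetCopy H)

def reverse : GadgetCopy H where
  vert := g.vert ∘ Fin.rev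
  entry := g.exit
  exit := g.entry
  vert_injective := g.vert_injective.comp Fin.rev_injective
  entry_ne_vert _ := g.exit_ne_vert _
  exit_ne_vert _ := g.entry_ne_vert _
  adj_vert h := g.adj_vert (aGadget_adj_rev.2 h)
  adj_entry := g.adj_exit
  adj_exit := g.adj_entry
  eq_of_adj_vert h := by
    rcases g.eq_of_adj_vert h with ⟨j', hj', rfl⟩ | ⟨hj, rfl⟩ | ⟨hj, rfl⟩
    · exact Or.inl ⟨j'.rev, by rwa [← aGadget_adj_rev, Fin.rev_rev], by simp⟩
    · exact Or.inr (Or.inr ⟨Fin.rev_eq_iff.1 hj, rfl⟩)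
    · exact Or.inr (Or.inl ⟨Fin.rev_eq_iff.1 hj, rfl⟩)

def swap : GadgetCopy H where
  vert := g.vert ∘ aGadgetSwap
  entry := g.entry
  exit := g.exit
  vert_injective := g.vert_injective.comp aGadgetSwap.injective
  entry_ne_vert _ := g.entry_ne_vert _
  exit_ne_vert _ := g.exit_ne_vert _
  adj_vert h := g.adj_vert (aGadget_adj_swap.2 h)
  adj_entry := g.adj_entry
  adj_exit := g.adj_exit
  eq_of_adj_vert h := by
    rcases g.eq_of_adj_vert h with ⟨j', hj', rfl⟩ | ⟨hj, rfl⟩ | ⟨hj, rfl⟩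
    · exact Or.inl ⟨aGadgetSwap.symm j', by rwa [← aGadget_adj_swap, Equiv.apply_symm_apply],
        by simp⟩
    · exact Or.inr (Or.inl ⟨aGadgetSwap.injective (hj.trans (by decide)), rfl⟩)
    · exact Or.inr (Or.inr ⟨aGadgetSwap.injective (hj.trans (by decide)), rfl⟩)

theorem adj_vert_zero {y : W} (h : H.Adj (g.vert 0) y) :
    y = g.entry ∨ y = g.vert 1 ∨ y = g.vert 2 := by
  rcases g.eq_of_adj_vert h with ⟨j, hj, rfl⟩ | ⟨-, rfl⟩ | ⟨h05, -⟩
  · obtain rfl | rfl : j = 1 ∨ j = 2 := by clear h; revert j; decide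
    exacts [Or.inr (Or.inl rfl), Or.inr (Or.inr rfl)]
  · exact Or.inl rfl
  · exact absurd h05 (by decide)

theorem adj_vert_one {y : W} (h : H.Adj (g.vert 1) y) :
    y = g.vert 0 ∨ y = g.vert 2 ∨ y = g.vert 3 := by
  rcases g.eq_of_adj_vert h with ⟨j, hj, rfl⟩ | ⟨h10, -⟩ | ⟨h15, -⟩
  · obtain rfl | rfl | rfl : j = 0 ∨ j = 2 ∨ j = 3 := by clear h; revert j; decide
    exacts [Or.inl rfl, Or.inr (Or.inl rfl), Or.inr (Or.inr rfl)]
  · exact absurd h10 (by decide)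
  · exact absurd h15 (by decide)

theorem adj_vert_two {y : W} (h : H.Adj (g.vert 2) y) :
    y = g.vert 0 ∨ y = g.vert 1 ∨ y = g.vert 4 := by
  rcases g.eq_of_adj_vert h with ⟨j, hj, rfl⟩ | ⟨h20, -⟩ | ⟨h25, -⟩
  · obtain rfl | rfl | rfl : j = 0 ∨ j = 1 ∨ j = 4 := by clear h; revert j; decide
    exacts [Or.inl rfl, Or.inr (Or.inl rfl), Or.inr (Or.inr rfl)]
  · exact absurd h20 (by decide)
  · exact absurd h25 (by decide)

theorem adj_vert_three {y : W} (h : H.Adj (g.vert 3) y) :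
    y = g.vert 1 ∨ y = g.vert 4 ∨ y = g.vert 5 := by
  rcases g.eq_of_adj_vert h with ⟨j, hj, rfl⟩ | ⟨h30, -⟩ | ⟨h35, -⟩
  · obtain rfl | rfl | rfl : j = 1 ∨ j = 4 ∨ j = 5 := by clear h; revert j; decide
    exacts [Or.inl rfl, Or.inr (Or.inl rfl), Or.inr (Or.inr rfl)]
  · exact absurd h30 (by decide)
  · exact absurd h35 (by decide)

theorem adj_vert_four {y : W} (h : H.Adj (g.vert 4) y) :
    y = g.vert 2 ∨ y = g.vert 3 ∨ y = g.vert 5 := by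
  rcases g.eq_of_adj_vert h with ⟨j, hj, rfl⟩ | ⟨h40, -⟩ | ⟨h45, -⟩
  · obtain rfl | rfl | rfl : j = 2 ∨ j = 3 ∨ j = 5 := by clear h; revert j; decide
    exacts [Or.inl rfl, Or.inr (Or.inl rfl), Or.inr (Or.inr rfl)]
  · exact absurd h40 (by decide)
  · exact absurd h45 (by decide)

theorem adj_vert_five {y : W} (h : H.Adj (g.vert 5) y) :
    y = g.vert 3 ∨ y = g.vert 4 ∨ y = g.exit := by
  rcases g.eq_of_adj_vert h with ⟨j, hj, rfl⟩ | ⟨h50, -⟩ | ⟨-, rfl⟩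
  · obtain rfl | rfl : j = 3 ∨ j = 4 := by clear h; revert j; decide
    exacts [Or.inl rfl, Or.inr (Or.inl rfl)]
  · exact absurd h50 (by decide)
  · exact Or.inr (Or.inr rfl)

theorem color_ne (hχ : ∀ z, Set.InjOn χ (insert z (H.neighborSet z))) {i i' : Fin 6}
    (h : AGadgetWithinTwo i i') : χ (g.vert i) ≠ χ (g.vert i') := by
  obtain ⟨hne, hadj | ⟨k, hki, hki'⟩⟩ := h
  · exact color_ne_of_adj hχ (g.adj_vert hadj)
  · exact color_ne_of_adj_of_adj hχ (g.adj_vert hki) (g.adj_vert hki')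
      (g.vert_injective.ne hne)

theorem nodup_colors (hχ : ∀ z, Set.InjOn χ (insert z (H.neighborSet z))) {l : List (Fin 6)}
    (hl : l.Pairwise AGadgetWithinTwo) : (l.map (χ ∘ g.vert)).Nodup :=
  hl.map _ fun _ _ => g.color_ne hχ

def Forces (χ : W → ℕ) (c c' : ℕ) : Prop :=
  ∀ k, χ (g.vert k) = c → ∃ y, H.Adj (g.vert k) y ∧ χ y = c'

variable {g} {cu c₁ c₂ d₂ d₃ : ℕ}

/-- Following the forced colours from vertex `1` gives vertices `3, 5` and the exit the colours
`cu, c₁, c₂`, and vertices `2, 4` the colours `d₂, d₃`; then vertex `5` has no neighbour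
coloured `d₂`. -/
theorem false_of_forces_of_color_one (hχ : ∀ z, Set.InjOn χ (insert z (H.neighborSet z)))
    (hc : [cu, c₁, c₂, d₂, d₃].Nodup) (h₁₂ : g.Forces χ c₁ c₂) (h₂u : g.Forces χ c₂ cu)
    (hu₁ : g.Forces χ cu c₁) (h₁d : g.Forces χ c₁ d₂) (hd : g.Forces χ d₂ d₃)
    (hentry : χ g.entry = cu) (h₀ : χ (g.vert 0) = c₁) (h₁ : χ (g.vert 1) = c₂) : False := by
  simp only [List.nodup_cons, List.mem_cons, List.not_mem_nil, List.nodup_nil, or_false,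
    not_or] at hc
  obtain ⟨⟨hu1, hu2, hud₂, -⟩, ⟨h12, h1d₂, h1d₃⟩, ⟨h2d₂, h2d₃⟩, hd₂d₃, -⟩ := hc
  have h₃ : χ (g.vert 3) = cu := by
    obtain ⟨y, hy, hyc⟩ := h₂u 1 h₁
    rcases g.adj_vert_one hy with rfl | rfl | rfl
    · exact absurd (h₀.symm.trans hyc) (Ne.symm hu1)
    · exact absurd (hyc.trans hentry.symm) (color_ne_of_adj_of_adj hχ
        (g.adj_vert (by decide)) g.adj_entry (g.entry_ne_vert 2).symm)
    · exact hyc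
  have h₅ : χ (g.vert 5) = c₁ := by
    obtain ⟨y, hy, hyc⟩ := hu₁ 3 h₃
    rcases g.adj_vert_three hy with rfl | rfl | rfl
    · exact absurd (h₁.symm.trans hyc) (Ne.symm h12)
    · obtain ⟨z, hz, hzc⟩ := h₁₂ 4 hyc
      rcases g.adj_vert_four hz with rfl | rfl | rfl
      · exact absurd (h₁.trans hzc.symm) (g.color_ne hχ (by decide))
      · exact absurd (h₃.symm.trans hzc) hu2
      · exact absurd (h₁.trans hzc.symm) (g.color_ne hχ (by decide))
    · exact hyc
  have hexit : χ g.exit = c₂ := by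
    obtain ⟨y, hy, hyc⟩ := h₁₂ 5 h₅
    rcases g.adj_vert_five hy with rfl | rfl | rfl
    · exact absurd (h₃.symm.trans hyc) hu2
    · exact absurd (h₁.trans hyc.symm) (g.color_ne hχ (by decide))
    · exact hyc
  have h₂ : χ (g.vert 2) = d₂ := by
    obtain ⟨y, hy, hyc⟩ := h₁d 0 h₀
    rcases g.adj_vert_zero hy with rfl | rfl | rfl
    · exact absurd (hentry.symm.trans hyc) hud₂
    · exact absurd (h₁.symm.trans hyc) h2d₂
    · exact hyc
  have h₄ : χ (g.vert 4) = d₃ := by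
    obtain ⟨y, hy, hyc⟩ := hd 2 h₂
    rcases g.adj_vert_two hy with rfl | rfl | rfl
    · exact absurd (h₀.symm.trans hyc) h1d₃
    · exact absurd (h₁.symm.trans hyc) h2d₃
    · exact hyc
  obtain ⟨y, hy, hyc⟩ := h₁d 5 h₅
  rcases g.adj_vert_five hy with rfl | rfl | rfl
  · exact hud₂ (h₃.symm.trans hyc)
  · exact hd₂d₃ (hyc.symm.trans h₄)
  · exact h2d₂ (hexit.symm.trans hyc)

/-- The case `χ (g.vert 2) = c₂` is the case `χ (g.vert 1) = c₂` for the copy `g.swap`. -/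
theorem false_of_forces (hχ : ∀ z, Set.InjOn χ (insert z (H.neighborSet z)))
    (hc : [cu, c₁, c₂, d₂, d₃].Nodup) (h₁₂ : g.Forces χ c₁ c₂) (h₂u : g.Forces χ c₂ cu)
    (hu₁ : g.Forces χ cu c₁) (h₁d : g.Forces χ c₁ d₂) (hd : g.Forces χ d₂ d₃)
    (hentry : χ g.entry = cu) (h₀ : χ (g.vert 0) = c₁) : False := by
  obtain ⟨y, hy, hyc⟩ := h₁₂ 0 h₀
  rcases g.adj_vert_zero hy with rfl | rfl | rfl
  · simp [← hentry.symm.trans hyc] at hc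
  · exact false_of_forces_of_color_one hχ hc h₁₂ h₂u hu₁ h₁d hd hentry h₀ hyc
  · exact false_of_forces_of_color_one (g := g.swap) hχ hc
      (fun k => h₁₂ (aGadgetSwap k)) (fun k => h₂u (aGadgetSwap k)) (fun k => hu₁ (aGadgetSwap k))
      (fun k => h₁d (aGadgetSwap k)) (fun k => hd (aGadgetSwap k)) hentry h₀ hyc

end GadgetCopy

end GadgetCopies

section GadgetedGraph

variable {G : SimpleGraph V} {x : Sym2 V → ℕ}

theorem not_adj_inl_inl (s t : V) : ¬ (gadgetGraph G x).Adj (Sum.inl s) (Sum.inl t) := by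
  simp [gadgetGraph, gadgetRel]

theorem adj_inl_inr_iff {s a b : V} {i : ℕ} {j : Fin 6} {h} :
    (gadgetGraph G x).Adj (Sum.inl s) (Sum.inr ⟨(a, b, i, j), h⟩) ↔
      (s = a ∧ i = 0 ∧ j = 0) ∨ (s = b ∧ i = x s(a, b) - 1 ∧ j = 5) := by
  simp [gadgetGraph, gadgetRel]

theorem adj_inr_inr_iff {a b a' b' : V} {i i' : ℕ} {j j' : Fin 6} {h h'} :
    (gadgetGraph G x).Adj (Sum.inr ⟨(a, b, i, j), h⟩) (Sum.inr ⟨(a', b', i', j'), h'⟩) ↔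
      a = a' ∧ b = b' ∧ ((i = i' ∧ aGadget.Adj j j') ∨
        (i' = i + 1 ∧ j = 5 ∧ j' = 0) ∨ (i = i' + 1 ∧ j' = 5 ∧ j = 0)) := by
  simp only [gadgetGraph, gadgetRel, aGadget, SimpleGraph.fromRel_adj, ne_eq, Sum.inr.injEq,
    Subtype.mk.injEq, Prod.mk.injEq]
  grind

variable {a b : V} {i : ℕ}

def chainPrev (h : a < b ∧ G.Adj a b ∧ i < x s(a, b)) : GadgetVert G x :=
  if i = 0 then Sum.inl a
  else Sum.inr ⟨(a, b, i - 1, 5), h.1, h.2.1, (Nat.sub_le i 1).trans_lt h.2.2⟩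

def chainNext (h : a < b ∧ G.Adj a b ∧ i < x s(a, b)) : GadgetVert G x :=
  if hi : i + 1 < x s(a, b) then Sum.inr ⟨(a, b, i + 1, 0), h.1, h.2.1, hi⟩ else Sum.inl b

def gadgetCopy (h : a < b ∧ G.Adj a b ∧ i < x s(a, b)) : GadgetCopy (gadgetGraph G x) where
  vert j := Sum.inr ⟨(a, b, i, j), h⟩
  entry := chainPrev h
  exit := chainNext h
  vert_injective j j' hjj' := by simpa using hjj'
  entry_ne_vert j := by
    unfold chainPrev
    split_ifs <;> simp
    omega
  exit_ne_vert j := by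
    unfold chainNext
    split_ifs <;> simp
  adj_vert hjj' := adj_inr_inr_iff.2 ⟨rfl, rfl, Or.inl ⟨rfl, hjj'⟩⟩
  adj_entry := by
    unfold chainPrev
    split_ifs with hi
    · exact ((adj_inl_inr_iff).2 (Or.inl ⟨rfl, hi, rfl⟩)).symm
    · exact adj_inr_inr_iff.2 ⟨rfl, rfl, Or.inr (Or.inr ⟨by omega, rfl, rfl⟩)⟩
  adj_exit := by
    unfold chainNext
    split_ifs with hi
    · exact adj_inr_inr_iff.2 ⟨rfl, rfl, Or.inr (Or.inl ⟨rfl, rfl, rfl⟩)⟩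
    · exact ((adj_inl_inr_iff).2 (Or.inr ⟨rfl, by omega, rfl⟩)).symm
  eq_of_adj_vert {j y} hy := by
    rcases y with s | ⟨⟨a', b', i', j'⟩, h'⟩
    · rw [(gadgetGraph G x).adj_comm, adj_inl_inr_iff] at hy
      rcases hy with ⟨rfl, hi, rfl⟩ | ⟨rfl, hi, rfl⟩
      · exact Or.inr (Or.inl ⟨rfl, by simp [chainPrev, hi]⟩)
      · exact Or.inr (Or.inr ⟨rfl, by simp [chainNext]; omega⟩)
    · obtain ⟨rfl, rfl, ⟨rfl, hjj'⟩ | ⟨rfl, rfl, rfl⟩ | ⟨rfl, rfl, rfl⟩⟩ := adj_inr_inr_iff.1 hy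
      · exact Or.inl ⟨j', hjj', rfl⟩
      · exact Or.inr (Or.inr ⟨rfl, by simp [chainNext, h'.2.2]⟩)
      · exact Or.inr (Or.inl ⟨rfl, by simp [chainPrev]⟩)

end GadgetedGraph

section GadgetedDistance

variable {G : SimpleGraph V} {x : Sym2 V → ℕ}

noncomputable def walkWeight {a b : GadgetVert G x} (p : (gadgetGraph G x).Walk a b) : ℝ≥0∞ :=
  (p.darts.map fun d => wt G x d.toProd.1 d.toProd.2).sum

theorem gdist_le_walkWeight {a b : GadgetVert G x} (p : (gadgetGraph G x).Walk a b) :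
    gdist G x a b ≤ walkWeight p :=
  iInf_le _ p

theorem walkWeight_append {a b c : GadgetVert G x} (p : (gadgetGraph G x).Walk a b)
    (q : (gadgetGraph G x).Walk b c) : walkWeight (p.append q) = walkWeight p + walkWeight q := by
  simp [walkWeight, SimpleGraph.Walk.darts_append]

theorem wt_comm (a b : GadgetVert G x) : wt G x a b = wt G x b a := by
  rcases a with a | a <;> rcases b with b | b <;> rfl

theorem walkWeight_reverse {a b : GadgetVert G x} (p : (gadgetGraph G x).Walk a b) :
    walkWeight p.reverse = walkWeight p := by
  simp [walkWeight, SimpleGraph.Walk.darts_reverse, Function.comp_def, wt_comm]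

theorem gdist_comm (a b : GadgetVert G x) : gdist G x a b = gdist G x b a := by
  have key (c d : GadgetVert G x) : gdist G x c d ≤ gdist G x d c :=
    le_iInf fun p => (gdist_le_walkWeight p.reverse).trans_eq (walkWeight_reverse p)
  exact (key a b).antisymm (key b a)

theorem gdist_triangle (a b c : GadgetVert G x) :
    gdist G x a c ≤ gdist G x a b + gdist G x b c := by
  simp only [gdist, ENNReal.iInf_add, ENNReal.add_iInf]
  exact le_iInf₂ fun q p => (gdist_le_walkWeight (p.append q)).trans_eq (walkWeight_append p q)

theorem gdist_self (a : GadgetVert G x) : gdist G x a a = 0 :=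
  nonpos_iff_eq_zero.1 (gdist_le_walkWeight .nil)

theorem gdist_le_wt {a b : GadgetVert G x} (h : (gadgetGraph G x).Adj a b) :
    gdist G x a b ≤ wt G x a b :=
  (gdist_le_walkWeight (.cons h .nil)).trans_eq (by simp [walkWeight])

/-- The darts of weight `1/2` are those entering or leaving an original vertex; as no two original
vertices are adjacent, they pair up except at original ends of the walk. -/
theorem exists_walkWeight_eq {a b : GadgetVert G x} (p : (gadgetGraph G x).Walk a b) :
    ∃ n : ℕ, walkWeight p = n * 2⁻¹ ∧ (Even n ↔ a.isLeft = b.isLeft) := by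
  induction p with
  | nil => exact ⟨0, by simp [walkWeight], by simp⟩
  | @cons a b c h q ih =>
    obtain ⟨m, hm, hpar⟩ := ih
    have hcons : walkWeight (.cons h q) = wt G x a b + walkWeight q := by simp [walkWeight]
    rcases a with a | a <;> rcases b with b | b
    · exact absurd h (not_adj_inl_inl a b)
    · refine ⟨m + 1, by rw [hcons, hm]; simp [wt]; ring, ?_⟩
      rw [Nat.even_add_one, hpar]
      cases c <;> simp
    · refine ⟨m + 1, by rw [hcons, hm]; simp [wt]; ring, ?_⟩
      rw [Nat.even_add_one, hpar]
      cases c <;> simp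
    · exact ⟨m, by rw [hcons, hm]; exact zero_add _, hpar⟩

theorem natCast_two_mul_mul_inv_two (r : ℕ) : ((2 * r : ℕ) : ℝ≥0∞) * 2⁻¹ = r := by
  push_cast
  rw [mul_comm 2, mul_assoc, ENNReal.mul_inv_cancel two_ne_zero ENNReal.ofNat_ne_top, mul_one]

theorem gdist_add_inv_two_le {v : V} {q : GadgetAux G x} {r : ℕ}
    (h : gdist G x (Sum.inl v) (Sum.inr q) ≤ r) :
    gdist G x (Sum.inl v) (Sum.inr q) + 2⁻¹ ≤ r := by
  have h2 : (2⁻¹ : ℝ≥0∞) ≠ 0 := by simp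
  have h2' : (2⁻¹ : ℝ≥0∞) ≠ ⊤ := by simp
  obtain ⟨p, hp⟩ : ∃ p, walkWeight p < r + 2⁻¹ :=
    iInf_lt_iff.1 (h.trans_lt (ENNReal.lt_add_right (by simp) h2))
  obtain ⟨n, hn, hodd⟩ := exists_walkWeight_eq p
  have hn_lt : n < 2 * r + 1 := by
    have hr : (r : ℝ≥0∞) + 2⁻¹ = ((2 * r + 1 : ℕ) : ℝ≥0∞) * 2⁻¹ := by
      rw [← natCast_two_mul_mul_inv_two r]; push_cast; ring
    rw [hn, hr, ENNReal.mul_lt_mul_iff_left h2 h2'] at hp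
    exact_mod_cast hp
  have hn_le : n + 1 ≤ 2 * r := by
    simp only [Sum.isLeft_inl, Sum.isLeft_inr, Bool.true_eq_false, iff_false,
      Nat.not_even_iff_odd] at hodd
    obtain ⟨k, rfl⟩ := hodd
    omega
  calc gdist G x (Sum.inl v) (Sum.inr q) + 2⁻¹ ≤ n * 2⁻¹ + 1 * 2⁻¹ := by
        rw [one_mul, ← hn]; gcongr; exact gdist_le_walkWeight p
    _ = ((n + 1 : ℕ) : ℝ≥0∞) * 2⁻¹ := by push_cast; ring
    _ ≤ ((2 * r : ℕ) : ℝ≥0∞) * 2⁻¹ := by gcongr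
    _ = r := natCast_two_mul_mul_inv_two r

theorem gdist_gadgetCopy_vert {a b : V} {i : ℕ} (h : a < b ∧ G.Adj a b ∧ i < x s(a, b))
    (j j' : Fin 6) : gdist G x ((gadgetCopy h).vert j) ((gadgetCopy h).vert j') = 0 := by
  obtain ⟨p⟩ := aGadget_connected.preconnected j j'
  induction p with
  | nil => exact gdist_self _
  | @cons j k j' hjk _ ih =>
    refine nonpos_iff_eq_zero.1 ((gdist_triangle _ ((gadgetCopy h).vert k) _).trans ?_)
    rw [ih, add_zero]
    exact gdist_le_wt ((gadgetCopy h).adj_vert hjk)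

theorem exists_gadgetCopy_of_adj_inl {v : V} {y : GadgetVert G x}
    (hy : (gadgetGraph G x).Adj (Sum.inl v) y) :
    ∃ g : GadgetCopy (gadgetGraph G x), g.entry = Sum.inl v ∧ g.vert 0 = y ∧
      ∀ k, gdist G x (Sum.inl v) (g.vert k) ≤ 2⁻¹ := by
  rcases y with s | ⟨⟨a, b, i, j⟩, h⟩
  · exact absurd hy (not_adj_inl_inl v s)
  have hball (j' : Fin 6) : gdist G x (Sum.inl v) ((gadgetCopy h).vert j') ≤ 2⁻¹ :=
    calc gdist G x (Sum.inl v) ((gadgetCopy h).vert j')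
        ≤ gdist G x (Sum.inl v) ((gadgetCopy h).vert j) +
          gdist G x ((gadgetCopy h).vert j) ((gadgetCopy h).vert j') := gdist_triangle _ _ _
      _ ≤ 2⁻¹ := by
        rw [gdist_gadgetCopy_vert, add_zero]
        exact (gdist_le_wt hy).trans_eq (by simp [wt])
  rcases adj_inl_inr_iff.1 hy with ⟨rfl, rfl, rfl⟩ | ⟨rfl, hi, rfl⟩
  · exact ⟨gadgetCopy h, by simp [gadgetCopy, chainPrev], rfl, hball⟩
  · refine ⟨(gadgetCopy h).reverse, ?_, rfl, fun k => hball k.rev⟩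
    simp [GadgetCopy.reverse, gadgetCopy, chainNext]
    omega

theorem inGball_of_gdist_le {X u Z : GadgetVert G x} {v : V} {r : ℕ} (hX : gdist G x X u = 0)
    (hu : gdist G x (Sum.inl v) u + 2⁻¹ ≤ r) (hZ : gdist G x (Sum.inl v) Z ≤ 2⁻¹) :
    inGball G x r X Z :=
  calc gdist G x X Z ≤ gdist G x X u + (gdist G x u (Sum.inl v) + gdist G x (Sum.inl v) Z) :=
        (gdist_triangle _ u _).trans (add_le_add_right (gdist_triangle _ _ _) _)
    _ ≤ 0 + (gdist G x (Sum.inl v) u + 2⁻¹) := by rw [hX, gdist_comm]; gcongr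
    _ ≤ r := by rw [zero_add]; exact hu

end GadgetedDistance

theorem stmt3_general (G : SimpleGraph V) (x : Sym2 V → ℕ) (r : ℕ)
    (χ : GadgetVert G x → ℕ)
    (hχ2 : Dist2Coloring G x χ)
    (hχc : EdgeConsistent G x r χ)
    (v : V) :
    ∀ u : GadgetVert G x, inGball G x r (Sum.inl v) u →
      (IsInner G x u ∨ IsOuter G x u) → χ u ≠ χ (Sum.inl v) := by
  rintro u hvu hu hcol
  obtain ⟨⟨⟨a, b, i, j⟩, h⟩, rfl⟩ : ∃ p, u = Sum.inr p := hu.elim And.left And.left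
  set g' := gadgetCopy h
  replace hvu := gdist_add_inv_two_le hvu
  have hball {Z} (hZ : gdist G x (Sum.inl v) Z ≤ 2⁻¹) (k : Fin 6) :
      inGball G x r (g'.vert k) Z :=
    inGball_of_gdist_le (gdist_gadgetCopy_vert h k j) hvu hZ
  obtain ⟨t₁, t₂, q₂, q₃, hjt₁, ht₁t₂, ht₂j, ht₁q₂, hq₂q₃, hnear⟩ :=
    aGadget_exists_triangle_tail j
  obtain ⟨y, hvy, hy⟩ := hχc _ _ (g'.adj_vert hjt₁) (Sum.inl v)
    (hball ((gdist_self _).trans_le zero_le) j) hcol.symm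
  obtain ⟨g, hentry, rfl, hg⟩ := exists_gadgetCopy_of_adj_inl hvy
  have hforce {k k'} (hkk' : aGadget.Adj k k') :
      g.Forces χ (χ (g'.vert k)) (χ (g'.vert k')) :=
    fun l hl => hχc _ _ (g'.adj_vert hkk') _ (hball (hg l) k) hl
  exact g.false_of_forces hχ2 (g'.nodup_colors hχ2 hnear) (hforce ht₁t₂) (hforce ht₂j)
    (hforce hjt₁) (hforce ht₁q₂) (hforce hq₂q₃) (hentry ▸ hcol.symm) hy

theorem stmt3 (G : SimpleGraph V) (x : Sym2 V → ℕ) (r : ℕ) (hr : 0 < r)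
    (hgad : CorrectlyGadgeted G x r)
    (χ : GadgetVert G x → ℕ)
    (hχ2 : Dist2Coloring G x χ)
    (hχc : EdgeConsistent G x r χ)
    (v : V) :
    ∀ u : GadgetVert G x, inGball G x r (Sum.inl v) u →
      (IsInner G x u ∨ IsOuter G x u) → χ u ≠ χ (Sum.inl v) :=
  stmt3_general G x r χ hχ2 hχc v

end LCLGadgetThms
end
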